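/- arXiv:2208.12647 — 9 statements merged into one kernel-verified Lean document; each statement's English description precedes it below -/
import Mathlib

section
/- Let g be a vector space with two 3-Lie algebra structures [·,·,·] and {·,·,·}. Then (g,[·,·,·],{·,·,·}) is a compatible 3-Lie algebra (i.e., the compatibility identity (2.4) holds) if and only if for all scalars k₁, k₂, the bracket ⟦x,y,z⟧ = k₁[x,y,z] + k₂{x,y,z} is a 3-Lie algebra structure on g. -/
section Defs

/-- A map `G × G × G → H` is trilinear if it is linear in each argument. -/
def IsTrilinearMap (K : Type*) {G H : Type*} [Field K] [AddCommGroup G] [Module K G]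
    [AddCommGroup H] [Module K H] (b : G → G → G → H) : Prop :=
  (∀ y z, IsLinearMap K (fun x => b x y z)) ∧
  (∀ x z, IsLinearMap K (fun y => b x y z)) ∧
  (∀ x y, IsLinearMap K (fun z => b x y z))

/-- Skew-symmetry of a ternary bracket. -/
def IsSkewSym {G H : Type*} [AddCommGroup G] [AddCommGroup H] (b : G → G → G → H) : Prop :=
  (∀ x y z, b x y z = - b y x z) ∧ (∀ x y z, b x y z = - b x z y)

/-- The Fundamental Identity of a 3-Lie algebra. -/
def FundIdent {G : Type*} [AddCommGroup G] (b : G → G → G → G) : Prop :=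
  ∀ x₁ x₂ x₃ x₄ x₅, b x₁ x₂ (b x₃ x₄ x₅) =
    b (b x₁ x₂ x₃) x₄ x₅ + b x₃ (b x₁ x₂ x₄) x₅ + b x₃ x₄ (b x₁ x₂ x₅)

/-- A 3-Lie algebra structure: a skew-symmetric trilinear bracket satisfying
the Fundamental Identity. -/
def Is3Lie (K : Type*) {G : Type*} [Field K] [AddCommGroup G] [Module K G]
    (b : G → G → G → G) : Prop :=
  IsTrilinearMap K b ∧ IsSkewSym b ∧ FundIdent b

/-- The compatibility condition (2.4) between two ternary brackets. -/
def Compat {G : Type*} [AddCommGroup G] (b₁ b₂ : G → G → G → G) : Prop :=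
  ∀ x₁ x₂ x₃ x₄ x₅,
    b₁ x₁ x₂ (b₂ x₃ x₄ x₅) + b₂ x₁ x₂ (b₁ x₃ x₄ x₅) =
    b₁ (b₂ x₁ x₂ x₃) x₄ x₅ + b₂ (b₁ x₁ x₂ x₃) x₄ x₅
    + b₁ x₃ (b₂ x₁ x₂ x₄) x₅ + b₂ x₃ (b₁ x₁ x₂ x₄) x₅
    + b₁ x₃ x₄ (b₂ x₁ x₂ x₅) + b₂ x₃ x₄ (b₁ x₁ x₂ x₅)

/-- The linear combination `k₁ • b₁ + k₂ • b₂` of two ternary brackets. -/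
def combBracket {K G : Type*} [Field K] [AddCommGroup G] [Module K G]
    (k₁ k₂ : K) (b₁ b₂ : G → G → G → G) : G → G → G → G :=
  fun x y z => k₁ • b₁ x y z + k₂ • b₂ x y z

/-- Nijenhuis operator condition for a ternary bracket. -/
def IsNijenhuis {K G : Type*} [Field K] [AddCommGroup G] [Module K G]
    (b : G → G → G → G) (N : G →ₗ[K] G) : Prop :=
  ∀ x y z, b (N x) (N y) (N z) =
    N (b (N x) (N y) z + b x (N y) (N z) + b (N x) y (N z)
      - N (b (N x) y z) - N (b x (N y) z) - N (b x y (N z)) + N (N (b x y z)))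

/-- The deformed bracket `[·,·,·]_N` associated to a linear map `N`. -/
def deformedBracket {K G : Type*} [Field K] [AddCommGroup G] [Module K G]
    (b : G → G → G → G) (N : G →ₗ[K] G) : G → G → G → G :=
  fun x y z =>
    b (N x) (N y) z + b x (N y) (N z) + b (N x) y (N z)
      - N (b (N x) y z) - N (b x (N y) z) - N (b x y (N z)) + N (N (b x y z))

/-- The mixed (degree one) compatibility/cocycle condition between two brackets
`b₁, b₂` and two 2-cochains `w₁, w₂`: the sum of the mixed versions of the
compatibility condition. -/
def MixedCocycleCond {G : Type*} [AddCommGroup G]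
    (b₁ b₂ w₁ w₂ : G → G → G → G) : Prop :=
  ∀ x₁ x₂ x₃ x₄ x₅,
    b₁ x₁ x₂ (w₂ x₃ x₄ x₅) + w₂ x₁ x₂ (b₁ x₃ x₄ x₅)
    + b₂ x₁ x₂ (w₁ x₃ x₄ x₅) + w₁ x₁ x₂ (b₂ x₃ x₄ x₅) =
    b₁ (w₂ x₁ x₂ x₃) x₄ x₅ + w₂ (b₁ x₁ x₂ x₃) x₄ x₅
    + b₂ (w₁ x₁ x₂ x₃) x₄ x₅ + w₁ (b₂ x₁ x₂ x₃) x₄ x₅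
    + b₁ x₃ (w₂ x₁ x₂ x₄) x₅ + w₂ x₃ (b₁ x₁ x₂ x₄) x₅
    + b₂ x₃ (w₁ x₁ x₂ x₄) x₅ + w₁ x₃ (b₂ x₁ x₂ x₄) x₅
    + b₁ x₃ x₄ (w₂ x₁ x₂ x₅) + w₂ x₃ x₄ (b₁ x₁ x₂ x₅)
    + b₂ x₃ x₄ (w₁ x₁ x₂ x₅) + w₁ x₃ x₄ (b₂ x₁ x₂ x₅)

/-- `ρ : Λ²g → gl(V)` as a skew-symmetric bilinear map into endomorphisms. -/
def IsRepMap (K : Type*) {G V : Type*} [Field K] [AddCommGroup G] [Module K G]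
    [AddCommGroup V] [Module K V] (ρ : G → G → Module.End K V) : Prop :=
  (∀ y, IsLinearMap K (fun x => ρ x y)) ∧ (∀ x, IsLinearMap K (fun y => ρ x y)) ∧
  (∀ x y, ρ x y = - ρ y x)

/-- The representation conditions of a 3-Lie algebra. -/
def Is3LieRep {K G V : Type*} [Field K] [AddCommGroup G] [Module K G]
    [AddCommGroup V] [Module K V] (b : G → G → G → G)
    (ρ : G → G → Module.End K V) : Prop :=
  (∀ x₁ x₂ x₃ x₄, ρ x₁ x₂ * ρ x₃ x₄ =
      ρ (b x₁ x₂ x₃) x₄ + ρ x₃ (b x₁ x₂ x₄) + ρ x₃ x₄ * ρ x₁ x₂) ∧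
  (∀ x₁ x₂ x₃ x₄, ρ x₁ (b x₂ x₃ x₄) =
      ρ x₃ x₄ * ρ x₁ x₂ - ρ x₂ x₄ * ρ x₁ x₃ + ρ x₂ x₃ * ρ x₁ x₄)

/-- The two mixed compatibility identities of a representation of a compatible
3-Lie algebra. -/
def CompatRep {K G V : Type*} [Field K] [AddCommGroup G] [Module K G]
    [AddCommGroup V] [Module K V] (b₁ b₂ : G → G → G → G)
    (ρ μ : G → G → Module.End K V) : Prop :=
  (∀ x₁ x₂ x₃ x₄,
    ρ (b₂ x₁ x₂ x₃) x₄ + μ (b₁ x₁ x₂ x₃) x₄ + ρ x₃ (b₂ x₁ x₂ x₄) + μ x₃ (b₁ x₁ x₂ x₄)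
      = (ρ x₁ x₂ * μ x₃ x₄ - μ x₃ x₄ * ρ x₁ x₂)
        - (ρ x₃ x₄ * μ x₁ x₂ - μ x₁ x₂ * ρ x₃ x₄)) ∧
  (∀ x₁ x₂ x₃ x₄,
    ρ (b₂ x₁ x₂ x₃) x₄ + μ (b₁ x₁ x₂ x₃) x₄ - ρ x₃ x₁ * μ x₂ x₄ - μ x₃ x₁ * ρ x₂ x₄
      = ρ x₁ x₂ * μ x₃ x₄ + μ x₁ x₂ * ρ x₃ x₄ + ρ x₂ x₃ * μ x₁ x₄ + μ x₂ x₃ * ρ x₁ x₄)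

/-- The semidirect product bracket on `g ⊕ V`. -/
def sdBracket {K G V : Type*} [Field K] [AddCommGroup G] [Module K G]
    [AddCommGroup V] [Module K V] (b : G → G → G → G)
    (ρ : G → G → Module.End K V) : G × V → G × V → G × V → G × V :=
  fun p q r => (b p.1 q.1 r.1, ρ p.1 q.1 r.2 + ρ q.1 r.1 p.2 + ρ r.1 p.1 q.2)

/-- The 2-cocycle expression of a 2-cochain `w` with coefficients in a
representation `ρ` of the 3-Lie algebra `(g,b)`. -/
def CocycleExpr {K G V : Type*} [Field K] [AddCommGroup G] [Module K G]
    [AddCommGroup V] [Module K V] (b : G → G → G → G)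
    (ρ : G → G → Module.End K V) (w : G → G → G → V) (x₁ x₂ x₃ x₄ x₅ : G) : V :=
  w x₁ x₂ (b x₃ x₄ x₅) - w (b x₁ x₂ x₃) x₄ x₅ - w x₃ (b x₁ x₂ x₄) x₅
    - w x₃ x₄ (b x₁ x₂ x₅)
  + ρ x₁ x₂ (w x₃ x₄ x₅) - ρ x₃ x₄ (w x₁ x₂ x₅) - ρ x₄ x₅ (w x₁ x₂ x₃)
    - ρ x₅ x₃ (w x₁ x₂ x₄)

/-- The bracket on `g ⊕ V` twisted by a 2-cochain `w`. -/
def extBracket {K G V : Type*} [Field K] [AddCommGroup G] [Module K G]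
    [AddCommGroup V] [Module K V] (b : G → G → G → G)
    (ρ : G → G → Module.End K V) (w : G → G → G → V) :
    G × V → G × V → G × V → G × V :=
  fun p q r => (b p.1 q.1 r.1,
    ρ p.1 q.1 r.2 + ρ q.1 r.1 p.2 + ρ r.1 p.1 q.2 + w p.1 q.1 r.1)

end Defs

/-! Expanding the Fundamental Identity of `k₁ [·,·,·] + k₂ {·,·,·}` by trilinearity gives
`k₁² · (FI of [·,·,·]) + k₂² · (FI of {·,·,·}) + k₁ k₂ · (compatibility identity)`, where each
identity is read as the difference of its two sides. Hence the combination satisfies the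
Fundamental Identity for all `k₁, k₂` as soon as the compatibility identity holds, and
conversely the case `k₁ = k₂ = 1` isolates the compatibility identity. -/

namespace IsTrilinearMap

variable {K G : Type*} [Field K] [AddCommGroup G] [Module K G] {b : G → G → G → G}

theorem map_add_left (h : IsTrilinearMap K b) (u v y z : G) :
    b (u + v) y z = b u y z + b v y z := (h.1 y z).map_add u v

theorem map_add_mid (h : IsTrilinearMap K b) (x u v z : G) :
    b x (u + v) z = b x u z + b x v z := (h.2.1 x z).map_add u v

theorem map_add_right (h : IsTrilinearMap K b) (x y u v : G) :
    b x y (u + v) = b x y u + b x y v := (h.2.2 x y).map_add u v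

theorem map_smul_left (h : IsTrilinearMap K b) (c : K) (u y z : G) :
    b (c • u) y z = c • b u y z := (h.1 y z).map_smul c u

theorem map_smul_mid (h : IsTrilinearMap K b) (c : K) (x u z : G) :
    b x (c • u) z = c • b x u z := (h.2.1 x z).map_smul c u

theorem map_smul_right (h : IsTrilinearMap K b) (c : K) (x y u : G) :
    b x y (c • u) = c • b x y u := (h.2.2 x y).map_smul c u

theorem combBracket {b₁ b₂ : G → G → G → G} (h₁ : IsTrilinearMap K b₁)
    (h₂ : IsTrilinearMap K b₂) (k₁ k₂ : K) : IsTrilinearMap K (combBracket k₁ k₂ b₁ b₂) := by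
  refine ⟨fun y z => ⟨fun u v => ?_, fun c u => ?_⟩, fun x z => ⟨fun u v => ?_, fun c u => ?_⟩,
    fun x y => ⟨fun u v => ?_, fun c u => ?_⟩⟩ <;>
  simp only [_root_.combBracket, h₁.map_add_left, h₂.map_add_left, h₁.map_add_mid,
    h₂.map_add_mid, h₁.map_add_right, h₂.map_add_right, h₁.map_smul_left, h₂.map_smul_left,
    h₁.map_smul_mid, h₂.map_smul_mid, h₁.map_smul_right, h₂.map_smul_right] <;>
  module

end IsTrilinearMap

theorem IsSkewSym.combBracket {K G : Type*} [Field K] [AddCommGroup G] [Module K G]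
    {b₁ b₂ : G → G → G → G} (h₁ : IsSkewSym b₁) (h₂ : IsSkewSym b₂) (k₁ k₂ : K) :
    IsSkewSym (combBracket k₁ k₂ b₁ b₂) :=
  ⟨fun x y z => by simp only [_root_.combBracket, h₁.1 x y z, h₂.1 x y z, smul_neg, neg_add],
    fun x y z => by simp only [_root_.combBracket, h₁.2 x y z, h₂.2 x y z, smul_neg, neg_add]⟩

section Defects

variable {G : Type*} [AddCommGroup G]

def fundDefect (b : G → G → G → G) (x₁ x₂ x₃ x₄ x₅ : G) : G :=
  b x₁ x₂ (b x₃ x₄ x₅) -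
    (b (b x₁ x₂ x₃) x₄ x₅ + b x₃ (b x₁ x₂ x₄) x₅ + b x₃ x₄ (b x₁ x₂ x₅))

def compatDefect (b₁ b₂ : G → G → G → G) (x₁ x₂ x₃ x₄ x₅ : G) : G :=
  b₁ x₁ x₂ (b₂ x₃ x₄ x₅) + b₂ x₁ x₂ (b₁ x₃ x₄ x₅) -
    (b₁ (b₂ x₁ x₂ x₃) x₄ x₅ + b₂ (b₁ x₁ x₂ x₃) x₄ x₅
    + b₁ x₃ (b₂ x₁ x₂ x₄) x₅ + b₂ x₃ (b₁ x₁ x₂ x₄) x₅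
    + b₁ x₃ x₄ (b₂ x₁ x₂ x₅) + b₂ x₃ x₄ (b₁ x₁ x₂ x₅))

theorem fundIdent_iff_fundDefect_eq_zero (b : G → G → G → G) :
    FundIdent b ↔ ∀ x₁ x₂ x₃ x₄ x₅, fundDefect b x₁ x₂ x₃ x₄ x₅ = 0 := by
  simp only [FundIdent, fundDefect, sub_eq_zero]

theorem compat_iff_compatDefect_eq_zero (b₁ b₂ : G → G → G → G) :
    Compat b₁ b₂ ↔ ∀ x₁ x₂ x₃ x₄ x₅, compatDefect b₁ b₂ x₁ x₂ x₃ x₄ x₅ = 0 := by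
  simp only [Compat, compatDefect, sub_eq_zero]

theorem fundDefect_combBracket {K : Type*} [Field K] [Module K G] {b₁ b₂ : G → G → G → G}
    (h₁ : IsTrilinearMap K b₁) (h₂ : IsTrilinearMap K b₂) (k₁ k₂ : K) (x₁ x₂ x₃ x₄ x₅ : G) :
    fundDefect (combBracket k₁ k₂ b₁ b₂) x₁ x₂ x₃ x₄ x₅ =
      k₁ ^ 2 • fundDefect b₁ x₁ x₂ x₃ x₄ x₅ + k₂ ^ 2 • fundDefect b₂ x₁ x₂ x₃ x₄ x₅ +
        (k₁ * k₂) • compatDefect b₁ b₂ x₁ x₂ x₃ x₄ x₅ := by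
  simp only [fundDefect, compatDefect, combBracket, h₁.map_add_left, h₂.map_add_left,
    h₁.map_add_mid, h₂.map_add_mid, h₁.map_add_right, h₂.map_add_right, h₁.map_smul_left,
    h₂.map_smul_left, h₁.map_smul_mid, h₂.map_smul_mid, h₁.map_smul_right, h₂.map_smul_right]
  module

end Defects

theorem stmt0_general {K G : Type*} [Field K] [AddCommGroup G] [Module K G]
    (b₁ b₂ : G → G → G → G) (h₁ : Is3Lie K b₁) (h₂ : Is3Lie K b₂) :
    Compat b₁ b₂ ↔ ∀ k₁ k₂ : K, Is3Lie K (combBracket k₁ k₂ b₁ b₂) := by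
  obtain ⟨t₁, s₁, f₁⟩ := h₁
  obtain ⟨t₂, s₂, f₂⟩ := h₂
  rw [fundIdent_iff_fundDefect_eq_zero] at f₁ f₂
  rw [compat_iff_compatDefect_eq_zero]
  constructor
  · intro hc k₁ k₂
    refine ⟨t₁.combBracket t₂ k₁ k₂, s₁.combBracket s₂ k₁ k₂, ?_⟩
    rw [fundIdent_iff_fundDefect_eq_zero]
    intro x₁ x₂ x₃ x₄ x₅
    simp only [fundDefect_combBracket t₁ t₂, f₁, f₂, hc, smul_zero, add_zero]
  · intro h x₁ x₂ x₃ x₄ x₅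
    have hf := (fundIdent_iff_fundDefect_eq_zero _).1 (h 1 1).2.2 x₁ x₂ x₃ x₄ x₅
    simpa only [fundDefect_combBracket t₁ t₂, f₁, f₂, smul_zero, zero_add, mul_one, one_smul]
      using hf

theorem stmt0 {K G : Type*} [Field K] [CharZero K] [AddCommGroup G] [Module K G]
    (b₁ b₂ : G → G → G → G) (h₁ : Is3Lie K b₁) (h₂ : Is3Lie K b₂) :
    Compat b₁ b₂ ↔ ∀ k₁ k₂ : K, Is3Lie K (combBracket k₁ k₂ b₁ b₂) :=
  stmt0_general b₁ b₂ h₁ h₂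
end

section
/- Let g be a 4-dimensional vector space with basis e₁,e₂,e₃,e₄. Define two skew-symmetric trilinear brackets by [e₁,e₂,e₃] = e₁ (all other basis brackets zero) and {e₂,e₃,e₄} = e₁ (all other basis brackets zero). Then (g,[·,·,·],{·,·,·}) is a compatible 3-Lie algebra. -/
/-!
Both brackets, and their sum, are of the form `x y z ↦ det (φ x, φ y, φ z) • e₀` for a linear
map `φ : G → K³` (indices from 0, `eⁱ` the coordinate functionals): take `φ = (e⁰, e¹, e²)` for
`[·,·,·]`, `φ = (e³, e¹, e²)` for `{·,·,·}` and `φ = (e⁰ + e³, e¹, e²)` for their sum. Every such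
bracket satisfies the Fundamental Identity: pulled back along `φ`, it is Cramer's rule in `K³`
paired with the cross product `φ x₁ × φ x₂`. The compatibility condition is the cross term of the
Fundamental Identity for the sum.
-/

namespace IsSkewSym

variable {G H : Type*} [AddCommGroup G] [AddCommGroup H] [IsAddTorsionFree H]
  {b : G → G → G → H}

theorem apply_self_left (hb : IsSkewSym b) (x z : G) : b x x z = 0 :=
  self_eq_neg.mp (hb.1 x x z)

theorem apply_self_right (hb : IsSkewSym b) (x y : G) : b x y y = 0 :=
  self_eq_neg.mp (hb.2 x y y)

end IsSkewSym

namespace IsTrilinearMap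

variable {K G H ι : Type*} [Field K] [AddCommGroup G] [Module K G] [AddCommGroup H] [Module K H]
  {b b' : G → G → G → H}

theorem ext_basis (e : Module.Basis ι K G) (hb : IsTrilinearMap K b)
    (hb' : IsTrilinearMap K b') (h : ∀ i j k, b (e i) (e j) (e k) = b' (e i) (e j) (e k)) :
    b = b' := by
  have h₂ : ∀ i j z, b (e i) (e j) z = b' (e i) (e j) z := fun i j =>
    LinearMap.congr_fun (e.ext (f₁ := (hb.2.2 _ _).mk') (f₂ := (hb'.2.2 _ _).mk') (h i j))
  have h₁ : ∀ i y z, b (e i) y z = b' (e i) y z := fun i y z =>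
    LinearMap.congr_fun
      (e.ext (f₁ := (hb.2.1 _ z).mk') (f₂ := (hb'.2.1 _ z).mk') fun j => h₂ i j z) y
  funext x y z
  exact LinearMap.congr_fun
    (e.ext (f₁ := (hb.1 y z).mk') (f₂ := (hb'.1 y z).mk') fun i => h₁ i y z) x

theorem ext_basis_of_lt [IsAddTorsionFree H] [LinearOrder ι] (e : Module.Basis ι K G)
    (hb : IsTrilinearMap K b) (hb' : IsTrilinearMap K b') (hs : IsSkewSym b) (hs' : IsSkewSym b')
    (h : ∀ i j k, i < j → j < k → b (e i) (e j) (e k) = b' (e i) (e j) (e k)) :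
    b = b' := by
  refine hb.ext_basis e hb' ?_
  have of_lt_left : ∀ i j k, i < j → b (e i) (e j) (e k) = b' (e i) (e j) (e k) := by
    intro i j k hij
    rcases lt_trichotomy j k with hjk | rfl | hkj
    · exact h i j k hij hjk
    · rw [hs.apply_self_right, hs'.apply_self_right]
    rw [hs.2, hs'.2, neg_inj]
    rcases lt_trichotomy i k with hik | rfl | hki
    · exact h i k j hik hkj
    · rw [hs.apply_self_left, hs'.apply_self_left]
    · rw [hs.1, hs'.1, neg_inj]
      exact h k i j hki hij
  intro i j k
  rcases lt_trichotomy i j with hij | rfl | hji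
  · exact of_lt_left i j k hij
  · rw [hs.apply_self_left, hs'.apply_self_left]
  · rw [hs.1, hs'.1, neg_inj]
    exact of_lt_left j i k hji

end IsTrilinearMap

section DetBracket

variable {K G : Type*} [Field K] [AddCommGroup G] [Module K G]

def tripleDet (α β γ : Module.Dual K G) (x y z : G) : K :=
  Matrix.det !![α x, α y, α z; β x, β y, β z; γ x, γ y, γ z]

def detBracket (α β γ : Module.Dual K G) (v : G) : G → G → G → G :=
  fun x y z => tripleDet α β γ x y z • v

theorem tripleDet_eq (α β γ : Module.Dual K G) (x y z : G) :
    tripleDet α β γ x y z =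
      α x * β y * γ z - α x * β z * γ y - α y * β x * γ z + α y * β z * γ x
        + α z * β x * γ y - α z * β y * γ x := by
  simp [tripleDet, Matrix.det_fin_three]

theorem detBracket_apply_eq_zero_of_left {α β γ : Module.Dual K G} (v : G) {x : G}
    (hα : α x = 0) (hβ : β x = 0) (hγ : γ x = 0) (y z : G) : detBracket α β γ v x y z = 0 := by
  simp [detBracket, tripleDet_eq, hα, hβ, hγ]

theorem detBracket_apply_eq_zero_of_right {α β γ : Module.Dual K G} (v : G) {z : G}
    (hα : α z = 0) (hβ : β z = 0) (hγ : γ z = 0) (x y : G) : detBracket α β γ v x y z = 0 := by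
  simp [detBracket, tripleDet_eq, hα, hβ, hγ]

theorem fundIdent_detBracket (α β γ : Module.Dual K G) (v : G) :
    FundIdent (detBracket α β γ v) := by
  intro x₁ x₂ x₃ x₄ x₅
  simp only [detBracket, tripleDet_eq, map_smul, smul_eq_mul, ← add_smul]
  congr 1
  ring

theorem isTrilinearMap_detBracket (α β γ : Module.Dual K G) (v : G) :
    IsTrilinearMap K (detBracket α β γ v) := by
  refine ⟨fun y z => ⟨fun x x' => ?_, fun c x => ?_⟩, fun x z => ⟨fun y y' => ?_, fun c y => ?_⟩,
    fun x y => ⟨fun z z' => ?_, fun c z => ?_⟩⟩ <;>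
  · simp only [detBracket, tripleDet_eq, map_add, map_smul, smul_eq_mul, ← add_smul, smul_smul]
    congr 1
    ring

theorem isSkewSym_detBracket (α β γ : Module.Dual K G) (v : G) :
    IsSkewSym (detBracket α β γ v) := by
  refine ⟨fun x y z => ?_, fun x y z => ?_⟩ <;>
  · simp only [detBracket, tripleDet_eq, ← neg_smul]
    congr 1
    ring

theorem detBracket_add_left (α α' β γ : Module.Dual K G) (v : G) :
    detBracket α β γ v + detBracket α' β γ v = detBracket (α + α') β γ v := by
  funext x y z
  simp only [Pi.add_apply, detBracket, tripleDet_eq, LinearMap.add_apply, ← add_smul]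
  congr 1
  ring

end DetBracket

theorem compat_of_fundIdent_add {K G : Type*} [Field K] [AddCommGroup G] [Module K G]
    {b₁ b₂ : G → G → G → G} (ht₁ : IsTrilinearMap K b₁) (ht₂ : IsTrilinearMap K b₂)
    (hf₁ : FundIdent b₁) (hf₂ : FundIdent b₂) (hf : FundIdent (b₁ + b₂)) :
    Compat b₁ b₂ := by
  intro x₁ x₂ x₃ x₄ x₅
  have h := hf x₁ x₂ x₃ x₄ x₅
  simp only [Pi.add_apply, (ht₁.1 _ _).map_add, (ht₁.2.1 _ _).map_add, (ht₁.2.2 _ _).map_add,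
    (ht₂.1 _ _).map_add, (ht₂.2.1 _ _).map_add, (ht₂.2.2 _ _).map_add, hf₁ x₁ x₂ x₃ x₄ x₅,
    hf₂ x₁ x₂ x₃ x₄ x₅] at h
  linear_combination (norm := abel) h

theorem stmt1 {K G : Type*} [Field K] [CharZero K] [AddCommGroup G] [Module K G]
    (e : Module.Basis (Fin 4) K G) (b₁ b₂ : G → G → G → G)
    (ht₁ : IsTrilinearMap K b₁) (hs₁ : IsSkewSym b₁)
    (ht₂ : IsTrilinearMap K b₂) (hs₂ : IsSkewSym b₂)
    (h₁ : b₁ (e 0) (e 1) (e 2) = e 0)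
    (h₁z : ∀ i j k : Fin 4, i < j → j < k → ¬(i = 0 ∧ j = 1 ∧ k = 2) →
      b₁ (e i) (e j) (e k) = 0)
    (h₂ : b₂ (e 1) (e 2) (e 3) = e 0)
    (h₂z : ∀ i j k : Fin 4, i < j → j < k → ¬(i = 1 ∧ j = 2 ∧ k = 3) →
      b₂ (e i) (e j) (e k) = 0) :
    Is3Lie K b₁ ∧ Is3Lie K b₂ ∧ Compat b₁ b₂ := by
  have := IsAddTorsionFree.of_isTorsionFree K G
  have hb₁ : b₁ = detBracket (e.coord 0) (e.coord 1) (e.coord 2) (e 0) := by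
    refine ht₁.ext_basis_of_lt e (isTrilinearMap_detBracket ..) hs₁ (isSkewSym_detBracket ..)
      fun i j k hij hjk => ?_
    by_cases hijk : i = 0 ∧ j = 1 ∧ k = 2
    · obtain ⟨rfl, rfl, rfl⟩ := hijk
      simp [h₁, detBracket, tripleDet_eq]
    · obtain rfl : k = 3 := by omega
      rw [h₁z i j 3 hij hjk hijk, detBracket_apply_eq_zero_of_right] <;> simp
  have hb₂ : b₂ = detBracket (e.coord 3) (e.coord 1) (e.coord 2) (e 0) := by
    refine ht₂.ext_basis_of_lt e (isTrilinearMap_detBracket ..) hs₂ (isSkewSym_detBracket ..)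
      fun i j k hij hjk => ?_
    by_cases hijk : i = 1 ∧ j = 2 ∧ k = 3
    · obtain ⟨rfl, rfl, rfl⟩ := hijk
      simp [h₂, detBracket, tripleDet_eq]
    · obtain rfl : i = 0 := by omega
      rw [h₂z 0 j k hij hjk hijk, detBracket_apply_eq_zero_of_left] <;> simp
  have hf₁ : FundIdent b₁ := hb₁ ▸ fundIdent_detBracket _ _ _ _
  have hf₂ : FundIdent b₂ := hb₂ ▸ fundIdent_detBracket _ _ _ _
  have hf : FundIdent (b₁ + b₂) := by
    rw [hb₁, hb₂, detBracket_add_left]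
    exact fundIdent_detBracket _ _ _ _
  exact ⟨⟨ht₁, hs₁, hf₁⟩, ⟨ht₂, hs₂, hf₂⟩, compat_of_fundIdent_add ht₁ ht₂ hf₁ hf₂ hf⟩
end

section
/- Let N be a Nijenhuis operator on a 3-Lie algebra (g,[·,·,·]). Then the deformed bracket [x,y,z]_N := [Nx,Ny,z] + [x,Ny,Nz] + [Nx,y,Nz] − N[Nx,y,z] − N[x,Ny,z] − N[x,y,Nz] + N²[x,y,z] defines a 3-Lie algebra structure on g, and N is a 3-Lie algebra homomorphism from (g,[·,·,·]_N) to (g,[·,·,·]), i.e., N([x,y,z]_N) = [Nx,Ny,Nz] for all x,y,z. -/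
/-! For a Nijenhuis operator `N` and every scalar `t`, the map `1 + t N` is a homomorphism from
`[·,·,·]_t = [·,·,·] + t [·,·,·]₁ + t² [·,·,·]_N` (`nijenhuisDeformation`) to `[·,·,·]`, so it
kills the Jacobiator of `[·,·,·]_t`. That Jacobiator is a polynomial of degree 4 in `t` with
leading coefficient the Jacobiator of `[·,·,·]_N`, and over an infinite field a polynomial `P`
with `(1 + t N) P(t) = 0` for all `t` vanishes. The homomorphism property
`N [x,y,z]_N = [Nx,Ny,Nz]` is the Nijenhuis condition itself. -/

open Finset Polynomial

section PolynomialIdentities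

variable {K G : Type*} [Field K] [Infinite K] [AddCommGroup G] [Module K G]

theorem eq_zero_of_forall_sum_pow_smul_add_sum_eq_zero {n m : ℕ} {u : Fin n → G}
    {w : Fin m → G}
    (h : ∀ t : K, ∑ i : Fin n, t ^ (i : ℕ) • u i + ∑ j : Fin m, t ^ (n + j : ℕ) • w j = 0)
    (i : Fin n) : u i = 0 := by
  rw [← Module.forall_dual_apply_eq_zero_iff K]
  intro φ
  let p : K[X] :=
    ∑ i : Fin n, X ^ (i : ℕ) * C (φ (u i)) + ∑ j : Fin m, X ^ (n + j : ℕ) * C (φ (w j))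
  have hp : p = 0 := Polynomial.funext fun t => by
    have := congrArg φ (h t)
    simp only [map_add, map_sum, map_smul, smul_eq_mul, map_zero] at this
    simpa only [p, eval_add, eval_finsetSum, eval_mul, eval_pow, eval_X, eval_C, eval_zero]
  have hcoeff : p.coeff i = φ (u i) := by
    have hlt : ∀ j : Fin m, (i : ℕ) ≠ n + j := fun j => by omega
    simp [p, finsetSum_coeff, Fin.val_inj, hlt]
  rw [← hcoeff, hp, coeff_zero]

theorem eq_zero_of_forall_one_add_smul_apply_sum_pow_smul_eq_zero (N : Module.End K G) {n : ℕ}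
    {P : Fin n → G} (h : ∀ t : K, (1 + t • N) (∑ i : Fin n, t ^ (i : ℕ) • P i) = 0) (i : Fin n) :
    P i = 0 := by
  refine eq_zero_of_forall_sum_pow_smul_add_sum_eq_zero (K := K)
    (w := fun j => -((-1 : K) ^ n • (N ^ n) (P j))) (fun t => ?_) i
  set D := ∑ i : Fin n, t ^ (i : ℕ) • P i
  have hD : D = (-t) • N D := by
    have := h t
    rw [LinearMap.add_apply, Module.End.one_apply, LinearMap.smul_apply] at this
    rw [neg_smul]
    exact eq_neg_of_add_eq_zero_left this
  have hiter : ∀ k : ℕ, D = (-t) ^ k • (N ^ k) D := by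
    intro k
    induction k with
    | zero => simp
    | succ k ih => rw [pow_succ, pow_succ, Module.End.mul_apply, mul_smul, ← map_smul, ← hD, ← ih]
  -- Iterating `D = -t N D` pushes `D` into degrees `≥ n`, disjoint from the degrees of `D`.
  have hshift : ∑ j : Fin n, t ^ (n + j : ℕ) • -((-1 : K) ^ n • (N ^ n) (P j)) = -D := by
    rw [hiter n, map_sum, Finset.smul_sum, ← Finset.sum_neg_distrib]
    refine Finset.sum_congr rfl fun j _ => ?_
    rw [map_smul, smul_smul, smul_neg, smul_smul, neg_pow, pow_add]
    congr 2
    ring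
  rw [hshift, add_neg_cancel]

end PolynomialIdentities

section ThreeLie

variable {K G : Type*} [Field K] [AddCommGroup G] [Module K G]

def infinitesimalBracket (b : G → G → G → G) (N : G →ₗ[K] G) : G → G → G → G :=
  fun x y z => b (N x) y z + b x (N y) z + b x y (N z) - N (b x y z)

def nijenhuisDeformation (b : G → G → G → G) (N : G →ₗ[K] G) (t : K) : G → G → G → G :=
  b + t • infinitesimalBracket b N + t ^ 2 • deformedBracket b N

def jacobiator {H : Type*} [AddCommGroup H] (b₁ b₂ : H → H → H → H) (x₁ x₂ x₃ x₄ x₅ : H) : H :=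
  b₁ x₁ x₂ (b₂ x₃ x₄ x₅) - b₁ (b₂ x₁ x₂ x₃) x₄ x₅ - b₁ x₃ (b₂ x₁ x₂ x₄) x₅
    - b₁ x₃ x₄ (b₂ x₁ x₂ x₅)

namespace IsTrilinearMap

variable {b : G → G → G → G}

theorem map_add₁ (hb : IsTrilinearMap K b) (x x' y z : G) :
    b (x + x') y z = b x y z + b x' y z := (hb.1 y z).map_add x x'

theorem map_add₂ (hb : IsTrilinearMap K b) (x y y' z : G) :
    b x (y + y') z = b x y z + b x y' z := (hb.2.1 x z).map_add y y'

theorem map_add₃ (hb : IsTrilinearMap K b) (x y z z' : G) :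
    b x y (z + z') = b x y z + b x y z' := (hb.2.2 x y).map_add z z'

theorem map_smul₁ (hb : IsTrilinearMap K b) (k : K) (x y z : G) :
    b (k • x) y z = k • b x y z := (hb.1 y z).map_smul k x

theorem map_smul₂ (hb : IsTrilinearMap K b) (k : K) (x y z : G) :
    b x (k • y) z = k • b x y z := (hb.2.1 x z).map_smul k y

theorem map_smul₃ (hb : IsTrilinearMap K b) (k : K) (x y z : G) :
    b x y (k • z) = k • b x y z := (hb.2.2 x y).map_smul k z

theorem infinitesimalBracket (hb : IsTrilinearMap K b) (N : G →ₗ[K] G) :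
    IsTrilinearMap K (infinitesimalBracket b N) := by
  refine ⟨fun y z => ⟨fun x x' => ?_, fun k x => ?_⟩, fun x z => ⟨fun y y' => ?_, fun k y => ?_⟩,
    fun x y => ⟨fun z z' => ?_, fun k z => ?_⟩⟩ <;>
  simp only [_root_.infinitesimalBracket, map_add, map_smul, hb.map_add₁, hb.map_add₂,
    hb.map_add₃, hb.map_smul₁, hb.map_smul₂, hb.map_smul₃, smul_add, smul_sub] <;>
  abel

theorem deformedBracket (hb : IsTrilinearMap K b) (N : G →ₗ[K] G) :
    IsTrilinearMap K (deformedBracket b N) := by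
  refine ⟨fun y z => ⟨fun x x' => ?_, fun k x => ?_⟩, fun x z => ⟨fun y y' => ?_, fun k y => ?_⟩,
    fun x y => ⟨fun z z' => ?_, fun k z => ?_⟩⟩ <;>
  simp only [_root_.deformedBracket, map_add, map_smul, hb.map_add₁, hb.map_add₂,
    hb.map_add₃, hb.map_smul₁, hb.map_smul₂, hb.map_smul₃, smul_add, smul_sub] <;>
  abel

end IsTrilinearMap

theorem IsSkewSym.deformedBracket {b : G → G → G → G} (hb : IsSkewSym b) (N : G →ₗ[K] G) :
    IsSkewSym (deformedBracket b N) := by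
  obtain ⟨hs₁, hs₂⟩ := hb
  constructor <;> intro x y z <;> simp only [_root_.deformedBracket]
  · rw [hs₁ (N y) (N x) z, hs₁ y (N x) (N z), hs₁ (N y) x (N z), hs₁ (N y) x z, hs₁ y (N x) z,
      hs₁ y x (N z), hs₁ y x z]
    simp only [map_neg]
    abel
  · rw [hs₂ (N x) (N z) y, hs₂ x (N z) (N y), hs₂ (N x) z (N y), hs₂ (N x) z y, hs₂ x (N z) y,
      hs₂ x z (N y), hs₂ x z y]
    simp only [map_neg]
    abel

theorem fundIdent_iff_jacobiator_eq_zero {H : Type*} [AddCommGroup H] {b : H → H → H → H} :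
    FundIdent b ↔ ∀ x₁ x₂ x₃ x₄ x₅, jacobiator b b x₁ x₂ x₃ x₄ x₅ = 0 := by
  simp only [FundIdent, jacobiator, sub_sub, sub_eq_zero, add_assoc]

theorem map_jacobiator {H F : Type*} [AddCommGroup H] [FunLike F G H] [AddMonoidHomClass F G H]
    {b' : G → G → G → G} {b : H → H → H → H} (f : F)
    (hf : ∀ x y z, f (b' x y z) = b (f x) (f y) (f z)) (x₁ x₂ x₃ x₄ x₅ : G) :
    f (jacobiator b' b' x₁ x₂ x₃ x₄ x₅) = jacobiator b b (f x₁) (f x₂) (f x₃) (f x₄) (f x₅) := by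
  simp only [jacobiator, map_sub, hf]

section Jacobiator

variable {b₁ b₁' b₂ b₂' : G → G → G → G} (x₁ x₂ x₃ x₄ x₅ : G)

theorem jacobiator_add_left :
    jacobiator (b₁ + b₁') b₂ x₁ x₂ x₃ x₄ x₅
      = jacobiator b₁ b₂ x₁ x₂ x₃ x₄ x₅ + jacobiator b₁' b₂ x₁ x₂ x₃ x₄ x₅ := by
  simp only [jacobiator, Pi.add_apply]
  abel

theorem jacobiator_smul_left (k : K) :
    jacobiator (k • b₁) b₂ x₁ x₂ x₃ x₄ x₅ = k • jacobiator b₁ b₂ x₁ x₂ x₃ x₄ x₅ := by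
  simp only [jacobiator, Pi.smul_apply, smul_sub]

theorem jacobiator_add_right (hb₁ : IsTrilinearMap K b₁) :
    jacobiator b₁ (b₂ + b₂') x₁ x₂ x₃ x₄ x₅
      = jacobiator b₁ b₂ x₁ x₂ x₃ x₄ x₅ + jacobiator b₁ b₂' x₁ x₂ x₃ x₄ x₅ := by
  simp only [jacobiator, Pi.add_apply, hb₁.map_add₁, hb₁.map_add₂, hb₁.map_add₃]
  abel

theorem jacobiator_smul_right (hb₁ : IsTrilinearMap K b₁) (k : K) :
    jacobiator b₁ (k • b₂) x₁ x₂ x₃ x₄ x₅ = k • jacobiator b₁ b₂ x₁ x₂ x₃ x₄ x₅ := by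
  simp only [jacobiator, Pi.smul_apply, hb₁.map_smul₁, hb₁.map_smul₂, hb₁.map_smul₃, smul_sub]

theorem jacobiator_add_smul_add_sq_smul {b c d : G → G → G → G} (hb : IsTrilinearMap K b)
    (hc : IsTrilinearMap K c) (hd : IsTrilinearMap K d) (t : K) :
    jacobiator (b + t • c + t ^ 2 • d) (b + t • c + t ^ 2 • d) x₁ x₂ x₃ x₄ x₅ =
      ∑ i : Fin 5, t ^ (i : ℕ) • ![jacobiator b b x₁ x₂ x₃ x₄ x₅,
        jacobiator b c x₁ x₂ x₃ x₄ x₅ + jacobiator c b x₁ x₂ x₃ x₄ x₅,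
        jacobiator b d x₁ x₂ x₃ x₄ x₅ + jacobiator c c x₁ x₂ x₃ x₄ x₅
          + jacobiator d b x₁ x₂ x₃ x₄ x₅,
        jacobiator c d x₁ x₂ x₃ x₄ x₅ + jacobiator d c x₁ x₂ x₃ x₄ x₅,
        jacobiator d d x₁ x₂ x₃ x₄ x₅] i := by
  simp only [jacobiator_add_left, jacobiator_smul_left, jacobiator_add_right _ _ _ _ _ hb,
    jacobiator_add_right _ _ _ _ _ hc, jacobiator_add_right _ _ _ _ _ hd,
    jacobiator_smul_right _ _ _ _ _ hb, jacobiator_smul_right _ _ _ _ _ hc,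
    jacobiator_smul_right _ _ _ _ _ hd, Fin.sum_univ_five]
  simp only [Fin.isValue, Fin.coe_ofNat_eq_mod, Nat.reduceMod, Matrix.cons_val]
  module

end Jacobiator

namespace IsNijenhuis

variable {b : G → G → G → G} {N : G →ₗ[K] G}

theorem one_add_smul_apply_nijenhuisDeformation (hN : IsNijenhuis b N) (hb : IsTrilinearMap K b)
    (t : K) (x y z : G) :
    (1 + t • N) (nijenhuisDeformation b N t x y z)
      = b ((1 + t • N) x) ((1 + t • N) y) ((1 + t • N) z) := by
  have hNxyz := hN x y z
  simp only [map_add, map_sub] at hNxyz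
  simp only [nijenhuisDeformation, infinitesimalBracket, deformedBracket, Pi.add_apply,
    Pi.smul_apply, LinearMap.add_apply, Module.End.one_apply, LinearMap.smul_apply, map_add,
    map_sub, map_smul, hb.map_add₁, hb.map_add₂, hb.map_add₃, hb.map_smul₁, hb.map_smul₂,
    hb.map_smul₃, smul_add, smul_sub]
  linear_combination (norm := module) (-t ^ 3) • hNxyz

theorem fundIdent_deformedBracket [Infinite K] (hN : IsNijenhuis b N) (hb : IsTrilinearMap K b)
    (hFI : FundIdent b) : FundIdent (deformedBracket b N) := by
  rw [fundIdent_iff_jacobiator_eq_zero] at hFI ⊢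
  intro x₁ x₂ x₃ x₄ x₅
  have hvanish : ∀ t : K, (1 + t • N)
      (jacobiator (nijenhuisDeformation b N t) (nijenhuisDeformation b N t) x₁ x₂ x₃ x₄ x₅) = 0 :=
    fun t => by
      rw [map_jacobiator _ (hN.one_add_smul_apply_nijenhuisDeformation hb t)]
      exact hFI _ _ _ _ _
  simp only [nijenhuisDeformation, jacobiator_add_smul_add_sq_smul _ _ _ _ _ hb
    (hb.infinitesimalBracket N) (hb.deformedBracket N)] at hvanish
  simpa using eq_zero_of_forall_one_add_smul_apply_sum_pow_smul_eq_zero N hvanish 4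

theorem is3Lie_deformedBracket [Infinite K] (hN : IsNijenhuis b N) (h : Is3Lie K b) :
    Is3Lie K (deformedBracket b N) :=
  ⟨h.1.deformedBracket N, h.2.1.deformedBracket N, hN.fundIdent_deformedBracket h.1 h.2.2⟩

end IsNijenhuis

end ThreeLie

theorem stmt3 {K G : Type*} [Field K] [CharZero K] [AddCommGroup G] [Module K G]
    (b : G → G → G → G) (h : Is3Lie K b) (N : G →ₗ[K] G) (hN : IsNijenhuis b N) :
    Is3Lie K (deformedBracket b N) ∧
    ∀ x y z, N (deformedBracket b N x y z) = b (N x) (N y) (N z) :=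
  ⟨hN.is3Lie_deformedBracket h, fun x y z => (hN x y z).symm⟩
end

section
/- Let N be a Nijenhuis operator on a compatible 3-Lie algebra (g,[·,·,·],{·,·,·}). Define ω₁(x,y,z) = [Nx,y,z] + [x,Ny,z] + [x,y,Nz] − N[x,y,z], ω̃₁(x,y,z) = [x,y,z]_N (the deformed bracket), and analogously ω₂, ω̃₂ for the second bracket. Then the six identities hold: (1) ω₁(x,y,z) = [Nx,y,z]+[x,Ny,z]+[x,y,Nz]−N[x,y,z]; (2) ω̃₁(x,y,z) + Nω₁(x,y,z) = [Nx,Ny,z]+[Nx,y,Nz]+[x,Ny,Nz]; (3) Nω̃₁(x,y,z) = [Nx,Ny,Nz]; and the analogous three identities (4)-(6) for {·,·,·}, ω₂, ω̃₂. Consequently Id + tN is a compatible 3-Lie algebra homomorphism from (g,[·,·,·]+tω₁+t²ω̃₁, {·,·,·}+tω₂+t²ω̃₂) to (g,[·,·,·],{·,·,·}) for every t. -/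
/-!
Applying `Id + t N` to `[x,y,z] + t ω(x,y,z) + t² [x,y,z]_N` gives a cubic in `t` with
coefficients `[x,y,z]`, `ω + N[x,y,z]`, `[x,y,z]_N + N ω` and `N [x,y,z]_N`. The first three are
the coefficients of the trilinear expansion of `[x + tNx, y + tNy, z + tNz]` by definition of `ω`
and `[·,·,·]_N`, and the Nijenhuis condition says exactly that the last one is `[Nx,Ny,Nz]`.
-/

/-- The term `ω` of the deformation `[·,·,·] + t ω + t² [·,·,·]_N`. -/
def firstOrderDeformation {K G : Type*} [Field K] [AddCommGroup G] [Module K G]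
    (b : G → G → G → G) (N : G →ₗ[K] G) : G → G → G → G :=
  fun x y z => b (N x) y z + b x (N y) z + b x y (N z) - N (b x y z)

def deformationFamily {K G : Type*} [Field K] [AddCommGroup G] [Module K G]
    (b : G → G → G → G) (N : G →ₗ[K] G) (t : K) : G → G → G → G :=
  fun x y z => b x y z + t • firstOrderDeformation b N x y z
    + (t * t) • deformedBracket b N x y z

section Deformation

variable {K G : Type*} [Field K] [AddCommGroup G] [Module K G]
  {b : G → G → G → G} {N : G →ₗ[K] G}

theorem IsTrilinearMap.map_add_smul (hb : IsTrilinearMap K b) (t : K) (x x' y y' z z' : G) :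
    b (x + t • x') (y + t • y') (z + t • z') =
      b x y z + t • (b x' y z + b x y' z + b x y z')
        + (t * t) • (b x' y' z + b x' y z' + b x y' z') + (t * t * t) • b x' y' z' := by
  obtain ⟨h₁, h₂, h₃⟩ := hb
  rw [(h₁ _ _).map_add, (h₁ _ _).map_smul, (h₂ _ _).map_add, (h₂ _ _).map_smul,
    (h₂ _ _).map_add, (h₂ _ _).map_smul]
  simp only [(h₃ _ _).map_add, (h₃ _ _).map_smul]
  module

theorem firstOrderDeformation_add_map (x y z : G) :
    firstOrderDeformation b N x y z + N (b x y z) =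
      b (N x) y z + b x (N y) z + b x y (N z) :=
  sub_add_cancel _ _

theorem deformedBracket_add_map_firstOrderDeformation (x y z : G) :
    deformedBracket b N x y z + N (firstOrderDeformation b N x y z) =
      b (N x) (N y) z + b (N x) y (N z) + b x (N y) (N z) := by
  simp only [deformedBracket, firstOrderDeformation, map_add, map_sub]
  abel

theorem IsNijenhuis.map_deformedBracket (hN : IsNijenhuis b N) (x y z : G) :
    N (deformedBracket b N x y z) = b (N x) (N y) (N z) :=
  (hN x y z).symm

theorem IsNijenhuis.deformationFamily_add_smul_map (hb : IsTrilinearMap K b)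
    (hN : IsNijenhuis b N) (t : K) (x y z : G) :
    deformationFamily b N t x y z + t • N (deformationFamily b N t x y z) =
      b (x + t • N x) (y + t • N y) (z + t • N z) := by
  calc _ = b x y z + t • (firstOrderDeformation b N x y z + N (b x y z))
        + (t * t) • (deformedBracket b N x y z + N (firstOrderDeformation b N x y z))
        + (t * t * t) • N (deformedBracket b N x y z) := by
          simp only [deformationFamily, map_add, map_smul]
          module
    _ = _ := by
      rw [firstOrderDeformation_add_map, deformedBracket_add_map_firstOrderDeformation,
        hN.map_deformedBracket, hb.map_add_smul]

end Deformation

theorem stmt9_general {K G : Type*} [Field K] [AddCommGroup G] [Module K G]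
    (b₁ b₂ : G → G → G → G) (h₁ : Is3Lie K b₁) (h₂ : Is3Lie K b₂)
    (N : G →ₗ[K] G)
    (hN₁ : IsNijenhuis b₁ N) (hN₂ : IsNijenhuis b₂ N)
    (w₁ w₂ : G → G → G → G)
    (hw₁ : ∀ x y z, w₁ x y z = b₁ (N x) y z + b₁ x (N y) z + b₁ x y (N z) - N (b₁ x y z))
    (hw₂ : ∀ x y z, w₂ x y z = b₂ (N x) y z + b₂ x (N y) z + b₂ x y (N z) - N (b₂ x y z)) :
    (∀ x y z, w₁ x y z =
      b₁ (N x) y z + b₁ x (N y) z + b₁ x y (N z) - N (b₁ x y z)) ∧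
    (∀ x y z, deformedBracket b₁ N x y z + N (w₁ x y z) =
      b₁ (N x) (N y) z + b₁ (N x) y (N z) + b₁ x (N y) (N z)) ∧
    (∀ x y z, N (deformedBracket b₁ N x y z) = b₁ (N x) (N y) (N z)) ∧
    (∀ x y z, w₂ x y z =
      b₂ (N x) y z + b₂ x (N y) z + b₂ x y (N z) - N (b₂ x y z)) ∧
    (∀ x y z, deformedBracket b₂ N x y z + N (w₂ x y z) =
      b₂ (N x) (N y) z + b₂ (N x) y (N z) + b₂ x (N y) (N z)) ∧
    (∀ x y z, N (deformedBracket b₂ N x y z) = b₂ (N x) (N y) (N z)) ∧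
    (∀ (t : K) (x y z : G),
      (b₁ x y z + t • w₁ x y z + (t * t) • deformedBracket b₁ N x y z)
        + t • N (b₁ x y z + t • w₁ x y z + (t * t) • deformedBracket b₁ N x y z)
      = b₁ (x + t • N x) (y + t • N y) (z + t • N z)) ∧
    (∀ (t : K) (x y z : G),
      (b₂ x y z + t • w₂ x y z + (t * t) • deformedBracket b₂ N x y z)
        + t • N (b₂ x y z + t • w₂ x y z + (t * t) • deformedBracket b₂ N x y z)
      = b₂ (x + t • N x) (y + t • N y) (z + t • N z)) := by
  obtain rfl : w₁ = firstOrderDeformation b₁ N := funext₃ hw₁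
  obtain rfl : w₂ = firstOrderDeformation b₂ N := funext₃ hw₂
  exact ⟨hw₁, deformedBracket_add_map_firstOrderDeformation, hN₁.map_deformedBracket,
    hw₂, deformedBracket_add_map_firstOrderDeformation, hN₂.map_deformedBracket,
    hN₁.deformationFamily_add_smul_map h₁.1, hN₂.deformationFamily_add_smul_map h₂.1⟩

theorem stmt9 {K G : Type*} [Field K] [CharZero K] [AddCommGroup G] [Module K G]
    (b₁ b₂ : G → G → G → G) (h₁ : Is3Lie K b₁) (h₂ : Is3Lie K b₂)
    (hc : Compat b₁ b₂) (N : G →ₗ[K] G)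
    (hN₁ : IsNijenhuis b₁ N) (hN₂ : IsNijenhuis b₂ N)
    (w₁ w₂ : G → G → G → G)
    (hw₁ : ∀ x y z, w₁ x y z = b₁ (N x) y z + b₁ x (N y) z + b₁ x y (N z) - N (b₁ x y z))
    (hw₂ : ∀ x y z, w₂ x y z = b₂ (N x) y z + b₂ x (N y) z + b₂ x y (N z) - N (b₂ x y z)) :
    (∀ x y z, w₁ x y z =
      b₁ (N x) y z + b₁ x (N y) z + b₁ x y (N z) - N (b₁ x y z)) ∧
    (∀ x y z, deformedBracket b₁ N x y z + N (w₁ x y z) =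
      b₁ (N x) (N y) z + b₁ (N x) y (N z) + b₁ x (N y) (N z)) ∧
    (∀ x y z, N (deformedBracket b₁ N x y z) = b₁ (N x) (N y) (N z)) ∧
    (∀ x y z, w₂ x y z =
      b₂ (N x) y z + b₂ x (N y) z + b₂ x y (N z) - N (b₂ x y z)) ∧
    (∀ x y z, deformedBracket b₂ N x y z + N (w₂ x y z) =
      b₂ (N x) (N y) z + b₂ (N x) y (N z) + b₂ x (N y) (N z)) ∧
    (∀ x y z, N (deformedBracket b₂ N x y z) = b₂ (N x) (N y) (N z)) ∧
    (∀ (t : K) (x y z : G),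
      (b₁ x y z + t • w₁ x y z + (t * t) • deformedBracket b₁ N x y z)
        + t • N (b₁ x y z + t • w₁ x y z + (t * t) • deformedBracket b₁ N x y z)
      = b₁ (x + t • N x) (y + t • N y) (z + t • N z)) ∧
    (∀ (t : K) (x y z : G),
      (b₂ x y z + t • w₂ x y z + (t * t) • deformedBracket b₂ N x y z)
        + t • N (b₂ x y z + t • w₂ x y z + (t * t) • deformedBracket b₂ N x y z)
      = b₂ (x + t • N x) (y + t • N y) (z + t • N z)) :=
  stmt9_general b₁ b₂ h₁ h₂ N hN₁ hN₂ w₁ w₂ hw₁ hw₂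
end

section
/- Let (g,[·,·,·],{·,·,·}) be a compatible 3-Lie algebra and V a vector space with linear maps ρ, μ: Λ²g → gl(V). Then (V;ρ,μ) is a representation of the compatible 3-Lie algebra if and only if the brackets [x₁+v₁,x₂+v₂,x₃+v₃] = [x₁,x₂,x₃] + ρ(x₁,x₂)v₃ + ρ(x₂,x₃)v₁ + ρ(x₃,x₁)v₂ and {x₁+v₁,x₂+v₂,x₃+v₃} = {x₁,x₂,x₃} + μ(x₁,x₂)v₃ + μ(x₂,x₃)v₁ + μ(x₃,x₁)v₂ make g ⊕ V a compatible 3-Lie algebra (the semidirect product). -/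
namespace IsTrilinearMap

variable {K G H : Type*} [Field K] [AddCommGroup G] [Module K G] [AddCommGroup H] [Module K H]
  {b : G → G → G → H}

lemma map_zero_left (hb : IsTrilinearMap K b) (y z : G) : b 0 y z = 0 := (hb.1 y z).map_zero

lemma map_zero_mid (hb : IsTrilinearMap K b) (x z : G) : b x 0 z = 0 := (hb.2.1 x z).map_zero

lemma map_zero_right (hb : IsTrilinearMap K b) (x y : G) : b x y 0 = 0 := (hb.2.2 x y).map_zero

end IsTrilinearMap

namespace IsRepMap

variable {K G V : Type*} [Field K] [AddCommGroup G] [Module K G] [AddCommGroup V] [Module K V]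
  {ρ : G → G → Module.End K V}

lemma map_zero_left (hρ : IsRepMap K ρ) (y : G) : ρ 0 y = 0 := (hρ.1 y).map_zero

lemma map_zero_right (hρ : IsRepMap K ρ) (x : G) : ρ x 0 = 0 := (hρ.2.1 x).map_zero

lemma apply_swap (hρ : IsRepMap K ρ) (x y : G) (v : V) : ρ x y v = -ρ y x v := by
  rw [hρ.2.2 x y, LinearMap.neg_apply]

end IsRepMap

section SemidirectProduct

variable {K G V : Type*} [Field K] [AddCommGroup G] [Module K G] [AddCommGroup V] [Module K V]
  {b b₁ b₂ : G → G → G → G} {ρ μ : G → G → Module.End K V}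

/-- The second identity is written cyclically in `x₂, x₃, x₄`, the shape in which it appears as
the coefficient of a `V`-part on `g ⊕ V`. -/
lemma is3LieRep_iff_apply (hρ : IsRepMap K ρ) : Is3LieRep b ρ ↔
    (∀ x₁ x₂ x₃ x₄ v, ρ x₁ x₂ (ρ x₃ x₄ v) =
      ρ (b x₁ x₂ x₃) x₄ v + ρ x₃ (b x₁ x₂ x₄) v + ρ x₃ x₄ (ρ x₁ x₂ v)) ∧
    (∀ x₁ x₂ x₃ x₄ v, ρ x₁ (b x₂ x₃ x₄) v =
      ρ x₃ x₄ (ρ x₁ x₂ v) + ρ x₄ x₂ (ρ x₁ x₃ v) + ρ x₂ x₃ (ρ x₁ x₄ v)) := by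
  simp only [Is3LieRep, LinearMap.ext_iff, Module.End.mul_apply, LinearMap.add_apply,
    LinearMap.sub_apply]
  refine and_congr_right fun _ => forall₅_congr fun x₁ x₂ x₃ x₄ v => ?_
  rw [hρ.apply_swap x₄ x₂, ← sub_eq_add_neg]

/-- Both identities are solved for one term, to serve as rewrite rules on `g ⊕ V`. -/
lemma compatRep_iff_apply : CompatRep b₁ b₂ ρ μ ↔
    (∀ x₁ x₂ x₃ x₄ v, ρ x₁ x₂ (μ x₃ x₄ v) =
      ρ (b₂ x₁ x₂ x₃) x₄ v + μ (b₁ x₁ x₂ x₃) x₄ v + ρ x₃ (b₂ x₁ x₂ x₄) v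
        + μ x₃ (b₁ x₁ x₂ x₄) v + μ x₃ x₄ (ρ x₁ x₂ v) + ρ x₃ x₄ (μ x₁ x₂ v)
        - μ x₁ x₂ (ρ x₃ x₄ v)) ∧
    (∀ x₁ x₂ x₃ x₄ v, ρ (b₂ x₁ x₂ x₃) x₄ v =
      ρ x₃ x₁ (μ x₂ x₄ v) + μ x₃ x₁ (ρ x₂ x₄ v) + ρ x₁ x₂ (μ x₃ x₄ v)
        + μ x₁ x₂ (ρ x₃ x₄ v) + ρ x₂ x₃ (μ x₁ x₄ v) + μ x₂ x₃ (ρ x₁ x₄ v)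
        - μ (b₁ x₁ x₂ x₃) x₄ v) := by
  simp only [CompatRep, LinearMap.ext_iff, Module.End.mul_apply, LinearMap.add_apply,
    LinearMap.sub_apply]
  refine and_congr (forall₅_congr fun _ _ _ _ _ => ⟨fun h => ?_, fun h => ?_⟩)
    (forall₅_congr fun _ _ _ _ _ => ⟨fun h => ?_, fun h => ?_⟩)
  · linear_combination (norm := abel) -h
  · linear_combination (norm := abel) -h
  · linear_combination (norm := abel) h
  · linear_combination (norm := abel) h

lemma isTrilinearMap_sdBracket (hb : IsTrilinearMap K b) (hρ : IsRepMap K ρ) :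
    IsTrilinearMap K (sdBracket b ρ) := by
  obtain ⟨hb₁, hb₂, hb₃⟩ := hb
  obtain ⟨hρ₁, hρ₂, -⟩ := hρ
  refine ⟨fun q r => ⟨fun p p' => ?_, fun c p => ?_⟩, fun p r => ⟨fun q q' => ?_, fun c q => ?_⟩,
    fun p q => ⟨fun r r' => ?_, fun c r => ?_⟩⟩ <;>
  ext <;>
  simp only [sdBracket, Prod.fst_add, Prod.snd_add, Prod.smul_fst, Prod.smul_snd,
    (hb₁ _ _).map_add, (hb₂ _ _).map_add, (hb₃ _ _).map_add, (hb₁ _ _).map_smul,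
    (hb₂ _ _).map_smul, (hb₃ _ _).map_smul, (hρ₁ _).map_add, (hρ₂ _).map_add, (hρ₁ _).map_smul,
    (hρ₂ _).map_smul, LinearMap.add_apply, LinearMap.smul_apply, map_add, map_smul] <;>
  module

lemma isSkewSym_sdBracket (hb : IsSkewSym b) (hρ : IsRepMap K ρ) :
    IsSkewSym (sdBracket b ρ) := by
  refine ⟨fun p q r => Prod.ext (hb.1 _ _ _) ?_, fun p q r => Prod.ext (hb.2 _ _ _) ?_⟩ <;>
  · simp only [sdBracket, Prod.snd_neg]
    rw [hρ.apply_swap p.1 q.1, hρ.apply_swap q.1 r.1, hρ.apply_swap r.1 p.1]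
    abel

lemma fundIdent_sdBracket (hρ : IsRepMap K ρ) (hb : FundIdent b) (hr : Is3LieRep b ρ) :
    FundIdent (sdBracket b ρ) := by
  obtain ⟨hr₁, hr₂⟩ := (is3LieRep_iff_apply hρ).mp hr
  rintro ⟨x₁, v₁⟩ ⟨x₂, v₂⟩ ⟨x₃, v₃⟩ ⟨x₄, v₄⟩ ⟨x₅, v₅⟩
  refine Prod.ext (hb x₁ x₂ x₃ x₄ x₅) ?_
  have hv₂ : ρ (b x₃ x₄ x₅) x₁ v₂ =
      ρ x₄ x₅ (ρ x₃ x₁ v₂) + ρ x₅ x₃ (ρ x₄ x₁ v₂) + ρ x₃ x₄ (ρ x₅ x₁ v₂) := by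
    simp only [hρ.apply_swap _ x₁, hr₂, map_neg, neg_add]
  simp only [sdBracket, Prod.snd_add, map_add]
  rw [hr₁ x₁ x₂ x₃ x₄ v₅, hr₁ x₁ x₂ x₄ x₅ v₃, hr₁ x₁ x₂ x₅ x₃ v₄, hr₂ x₂ x₃ x₄ x₅ v₁, hv₂]
  abel

lemma is3LieRep_of_fundIdent_sdBracket (hb : IsTrilinearMap K b) (hρ : IsRepMap K ρ)
    (h : FundIdent (sdBracket b ρ)) : Is3LieRep b ρ := by
  refine (is3LieRep_iff_apply hρ).mpr ⟨fun x₁ x₂ x₃ x₄ v => ?_, fun x₁ x₂ x₃ x₄ v => ?_⟩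
  · simpa only [sdBracket, Prod.mk_add_mk, hb.map_zero_right, hρ.map_zero_left,
      hρ.map_zero_right, map_zero, LinearMap.zero_apply, add_zero]
      using congrArg Prod.snd (h (x₁, 0) (x₂, 0) (x₃, 0) (x₄, 0) (0, v))
  · simpa only [sdBracket, Prod.mk_add_mk, hb.map_zero_left, hb.map_zero_mid,
      hb.map_zero_right, hρ.map_zero_left, hρ.map_zero_right, map_zero, LinearMap.zero_apply,
      add_zero, zero_add]
      using congrArg Prod.snd (h (0, v) (x₁, 0) (x₂, 0) (x₃, 0) (x₄, 0))

lemma is3Lie_sdBracket_iff (hb : Is3Lie K b) (hρ : IsRepMap K ρ) :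
    Is3Lie K (sdBracket b ρ) ↔ Is3LieRep b ρ :=
  ⟨fun h => is3LieRep_of_fundIdent_sdBracket hb.1 hρ h.2.2, fun hr =>
    ⟨isTrilinearMap_sdBracket hb.1 hρ, isSkewSym_sdBracket hb.2.1 hρ,
      fundIdent_sdBracket hρ hb.2.2 hr⟩⟩

lemma compat_sdBracket (hρ : IsRepMap K ρ) (hμ : IsRepMap K μ) (hc : Compat b₁ b₂)
    (hcr : CompatRep b₁ b₂ ρ μ) : Compat (sdBracket b₁ ρ) (sdBracket b₂ μ) := by
  obtain ⟨hd₁, hd₂⟩ := compatRep_iff_apply.mp hcr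
  rintro ⟨x₁, v₁⟩ ⟨x₂, v₂⟩ ⟨x₃, v₃⟩ ⟨x₄, v₄⟩ ⟨x₅, v₅⟩
  refine Prod.ext (hc x₁ x₂ x₃ x₄ x₅) ?_
  simp only [sdBracket, Prod.snd_add, map_add]
  rw [hd₁ x₁ x₂ x₃ x₄ v₅, hd₁ x₁ x₂ x₄ x₅ v₃, hd₁ x₁ x₂ x₅ x₃ v₄,
    hρ.apply_swap x₂ (b₂ x₃ x₄ x₅) v₁, hd₂ x₃ x₄ x₅ x₂ v₁, hd₂ x₃ x₄ x₅ x₁ v₂,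
    hμ.apply_swap x₄ x₂ v₁, hρ.apply_swap x₄ x₂ v₁, hμ.apply_swap x₅ x₂ v₁,
    hρ.apply_swap x₅ x₂ v₁, hμ.apply_swap x₃ x₂ v₁, hρ.apply_swap x₃ x₂ v₁,
    hμ.apply_swap (b₁ x₃ x₄ x₅) x₂ v₁]
  simp only [map_neg]
  abel

lemma compatRep_of_compat_sdBracket (hb₁ : IsTrilinearMap K b₁) (hb₂ : IsTrilinearMap K b₂)
    (hρ : IsRepMap K ρ) (hμ : IsRepMap K μ) (h : Compat (sdBracket b₁ ρ) (sdBracket b₂ μ)) :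
    CompatRep b₁ b₂ ρ μ := by
  refine compatRep_iff_apply.mpr ⟨fun x₁ x₂ x₃ x₄ v => ?_, fun x₁ x₂ x₃ x₄ v => ?_⟩
  · have e := congrArg Prod.snd (h (x₁, 0) (x₂, 0) (x₃, 0) (x₄, 0) (0, v))
    simp only [sdBracket, Prod.mk_add_mk, hb₁.map_zero_right, hb₂.map_zero_right,
      hρ.map_zero_left, hρ.map_zero_right, hμ.map_zero_left, hμ.map_zero_right, map_zero,
      add_zero] at e
    linear_combination (norm := abel) e
  · have e := congrArg Prod.snd (h (x₄, 0) (0, v) (x₁, 0) (x₂, 0) (x₃, 0))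
    simp only [sdBracket, Prod.mk_add_mk, hb₁.map_zero_left, hb₁.map_zero_mid,
      hb₁.map_zero_right, hb₂.map_zero_left, hb₂.map_zero_mid, hb₂.map_zero_right,
      hρ.map_zero_left, hρ.map_zero_right, hμ.map_zero_left, hμ.map_zero_right, map_zero,
      add_zero, zero_add] at e
    linear_combination (norm := abel) e

lemma compat_sdBracket_iff (hb₁ : IsTrilinearMap K b₁) (hb₂ : IsTrilinearMap K b₂)
    (hc : Compat b₁ b₂) (hρ : IsRepMap K ρ) (hμ : IsRepMap K μ) :
    Compat (sdBracket b₁ ρ) (sdBracket b₂ μ) ↔ CompatRep b₁ b₂ ρ μ :=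
  ⟨compatRep_of_compat_sdBracket hb₁ hb₂ hρ hμ, compat_sdBracket hρ hμ hc⟩

end SemidirectProduct

theorem stmt10_general {K G V : Type*} [Field K] [AddCommGroup G] [Module K G]
    [AddCommGroup V] [Module K V]
    (b₁ b₂ : G → G → G → G) (h₁ : Is3Lie K b₁) (h₂ : Is3Lie K b₂) (hc : Compat b₁ b₂)
    (ρ μ : G → G → Module.End K V) (hρ : IsRepMap K ρ) (hμ : IsRepMap K μ) :
    (Is3LieRep b₁ ρ ∧ Is3LieRep b₂ μ ∧ CompatRep b₁ b₂ ρ μ) ↔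
    (Is3Lie K (sdBracket b₁ ρ) ∧ Is3Lie K (sdBracket b₂ μ) ∧
      Compat (sdBracket b₁ ρ) (sdBracket b₂ μ)) := by
  rw [is3Lie_sdBracket_iff h₁ hρ, is3Lie_sdBracket_iff h₂ hμ,
    compat_sdBracket_iff h₁.1 h₂.1 hc hρ hμ]

theorem stmt10 {K G V : Type*} [Field K] [CharZero K] [AddCommGroup G] [Module K G]
    [AddCommGroup V] [Module K V]
    (b₁ b₂ : G → G → G → G) (h₁ : Is3Lie K b₁) (h₂ : Is3Lie K b₂) (hc : Compat b₁ b₂)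
    (ρ μ : G → G → Module.End K V) (hρ : IsRepMap K ρ) (hμ : IsRepMap K μ) :
    (Is3LieRep b₁ ρ ∧ Is3LieRep b₂ μ ∧ CompatRep b₁ b₂ ρ μ) ↔
    (Is3Lie K (sdBracket b₁ ρ) ∧ Is3Lie K (sdBracket b₂ μ) ∧
      Compat (sdBracket b₁ ρ) (sdBracket b₂ μ)) :=
  stmt10_general b₁ b₂ h₁ h₂ hc ρ μ hρ hμ
end

section
/- Let (V;ρ,μ) be a representation of a compatible 3-Lie algebra (g,[·,·,·],{·,·,·}). Define ρ*, μ*: Λ²g → gl(V*) by ⟨ρ*(x₁,x₂)α, v⟩ = −⟨α, ρ(x₁,x₂)v⟩ and ⟨μ*(x₁,x₂)α, v⟩ = −⟨α, μ(x₁,x₂)v⟩. Then (V*; ρ*, μ*) is a representation of the compatible 3-Lie algebra (g,[·,·,·],{·,·,·}). -/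
/-!
The map `f ↦ -fᵀ` from `End V` to `End V*` is additive and satisfies
`(-fᵀ)(-gᵀ) = (g f)ᵀ`, so it turns commutators into commutators. Hence every defining
identity whose nonlinear terms are commutators passes from `(ρ, μ)` to `(ρ*, μ*)` verbatim.
The two remaining identities (the second one of a 3-Lie representation and the second
compatibility identity) are not of this form; they pass to the dual once they have been
rewritten with all products in reverse order, and the reversed identities follow from the
commutator identities together with skew-symmetry.
-/

theorem eq_of_sub_eq_map_sub {A B F : Type*} [AddCommGroup A] [AddCommGroup B] [FunLike F A B]
    [AddMonoidHomClass F A B] (f : F) {x y : A} {a b : B} (h : x = y) (hab : a - b = f (x - y)) :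
    a = b := by
  rwa [h, sub_self, map_zero, sub_eq_zero] at hab

section Contragredient

variable {R V : Type*} [CommRing R] [AddCommGroup V] [Module R V]

noncomputable def contragredient : Module.End R V →ₗ[R] Module.End R (Module.Dual R V) where
  toFun f := -f.dualMap
  map_add' f g := by ext; simp; abel
  map_smul' c f := by ext; simp

@[simp]
theorem contragredient_apply (f : Module.End R V) (α : Module.Dual R V) (v : V) :
    contragredient f α v = -α (f v) :=
  rfl

theorem contragredient_mul (f g : Module.End R V) :
    contragredient (f * g) = -(contragredient g * contragredient f) := by
  ext α v
  simp

end Contragredient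

theorem IsSkewSym.rotate {G H : Type*} [AddCommGroup G] [AddCommGroup H]
    {b : G → G → G → H} (hb : IsSkewSym b) (x y z : G) :
    b x y z = b y z x := by
  rw [hb.1, hb.2 y x z, neg_neg]

theorem IsSkewSym.swap_right {G H : Type*} [AddCommGroup G] [AddCommGroup H]
    {b : G → G → G → H} (hb : IsSkewSym b) (x y z : G) :
    b x z y = -b x y z :=
  hb.2 x z y

section DualRep

variable {K G V : Type*} [Field K] [AddCommGroup G] [Module K G] [AddCommGroup V] [Module K V]

theorem IsRepMap.neg_left {ρ : G → G → Module.End K V} (hρ : IsRepMap K ρ) (x y : G) :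
    ρ (-x) y = -ρ x y :=
  (hρ.1 y).map_neg x

theorem IsRepMap.neg_right {ρ : G → G → Module.End K V} (hρ : IsRepMap K ρ) (x y : G) :
    ρ x (-y) = -ρ x y :=
  (hρ.2.1 x).map_neg y

noncomputable def dualRep (ρ : G → G → Module.End K V) : G → G → Module.End K (Module.Dual K V) :=
  fun x y => contragredient (ρ x y)

theorem IsRepMap.dualRep {ρ : G → G → Module.End K V} (hρ : IsRepMap K ρ) :
    IsRepMap K (dualRep ρ) := by
  refine ⟨fun y => ⟨fun x x' => ?_, fun c x => ?_⟩, fun x => ⟨fun y y' => ?_, fun c y => ?_⟩,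
    fun x y => ?_⟩ <;> simp only [_root_.dualRep, ← map_add, ← map_smul]
  · rw [(hρ.1 y).map_add]
  · rw [(hρ.1 y).map_smul]
  · rw [(hρ.2.1 x).map_add]
  · rw [(hρ.2.1 x).map_smul]
  · rw [hρ.2.2, map_neg]

theorem Is3LieRep.alternating_sum {b : G → G → G → G} {ρ : G → G → Module.End K V}
    (hb : IsSkewSym b) (hρ : IsRepMap K ρ) (hrep : Is3LieRep b ρ) (x₁ x₂ x₃ x₄ : G) :
    ρ x₁ (b x₂ x₃ x₄) - ρ x₂ (b x₁ x₃ x₄) + ρ x₃ (b x₁ x₂ x₄) - ρ x₄ (b x₁ x₂ x₃) = 0 := by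
  have h₁ := hrep.1 x₁ x₂ x₃ x₄
  have h₂ := hrep.1 x₃ x₄ x₁ x₂
  rw [← hb.rotate x₁ x₃ x₄, ← hb.rotate x₂ x₃ x₄, hρ.2.2 (b x₁ x₃ x₄)] at h₂
  rw [hρ.2.2 (b x₁ x₂ x₃)] at h₁
  linear_combination (norm := noncomm_ring) -(h₁ + h₂)

/-- The second representation identity for `-ρ` in the opposite ring of `End V`: the form that
`contragredient` carries to the second identity for `dualRep ρ`. -/
theorem Is3LieRep.op_second {b : G → G → G → G} {ρ : G → G → Module.End K V}
    (hb : IsSkewSym b) (hρ : IsRepMap K ρ) (hrep : Is3LieRep b ρ) (x₁ x₂ x₃ x₄ : G) :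
    ρ x₁ (b x₂ x₃ x₄) = -(ρ x₁ x₂ * ρ x₃ x₄ - ρ x₁ x₃ * ρ x₂ x₄ + ρ x₁ x₄ * ρ x₂ x₃) := by
  have h₁₂ := hrep.1 x₁ x₂ x₃ x₄
  have h₁₃ := hrep.1 x₁ x₃ x₂ x₄
  have h₁₄ := hrep.1 x₁ x₄ x₂ x₃
  rw [hb.swap_right x₁ x₂ x₃, hρ.neg_left] at h₁₃
  rw [hb.swap_right x₁ x₂ x₄, hb.swap_right x₁ x₃ x₄, hρ.neg_left, hρ.neg_right] at h₁₄
  rw [hρ.2.2 (b x₁ x₂ x₃)] at h₁₂ h₁₃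
  rw [hρ.2.2 (b x₁ x₂ x₄)] at h₁₄
  linear_combination (norm := noncomm_ring)
    h₁₂ - h₁₃ + h₁₄ - hrep.2 x₁ x₂ x₃ x₄ + 2 * hrep.alternating_sum hb hρ x₁ x₂ x₃ x₄

/-- The second compatibility identity for `-ρ, -μ` in the opposite ring of `End V`. -/
theorem CompatRep.op_second {b₁ b₂ : G → G → G → G} {ρ μ : G → G → Module.End K V}
    (hb₁ : IsSkewSym b₁) (hb₂ : IsSkewSym b₂) (hρ : IsRepMap K ρ) (hμ : IsRepMap K μ)
    (hrepc : CompatRep b₁ b₂ ρ μ) (x₁ x₂ x₃ x₄ : G) :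
    ρ (b₂ x₁ x₂ x₃) x₄ + μ (b₁ x₁ x₂ x₃) x₄ + μ x₂ x₄ * ρ x₃ x₁ + ρ x₂ x₄ * μ x₃ x₁ =
      -(μ x₃ x₄ * ρ x₁ x₂ + ρ x₃ x₄ * μ x₁ x₂ + μ x₁ x₄ * ρ x₂ x₃ + ρ x₁ x₄ * μ x₂ x₃) := by
  have h₁ := hrepc.1 x₃ x₁ x₂ x₄
  have h₂ := hrepc.2 x₃ x₄ x₁ x₂
  rw [hb₁.rotate x₃ x₁ x₂, hb₂.rotate x₃ x₁ x₂, hb₁.1 x₃, hb₂.1 x₃, hρ.neg_right, hμ.neg_right,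
    hρ.2.2 x₂, hμ.2.2 x₂] at h₁
  rw [← hb₁.rotate x₁ x₃ x₄, ← hb₂.rotate x₁ x₃ x₄, hρ.2.2 x₁ x₃, hμ.2.2 x₁ x₃, hρ.2.2 x₄ x₂,
    hμ.2.2 x₄ x₂, hρ.2.2 x₄ x₁, hμ.2.2 x₄ x₁, hρ.2.2 x₃ x₂, hμ.2.2 x₃ x₂] at h₂
  linear_combination (norm := noncomm_ring) h₁ - h₂

theorem Is3LieRep.dualRep {b : G → G → G → G} {ρ : G → G → Module.End K V}
    (hb : IsSkewSym b) (hρ : IsRepMap K ρ) (hrep : Is3LieRep b ρ) :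
    Is3LieRep b (dualRep ρ) := by
  refine ⟨fun x₁ x₂ x₃ x₄ => eq_of_sub_eq_map_sub contragredient (hrep.1 x₁ x₂ x₃ x₄) ?_,
    fun x₁ x₂ x₃ x₄ => eq_of_sub_eq_map_sub contragredient (hrep.op_second hb hρ x₁ x₂ x₃ x₄) ?_⟩
  all_goals
    simp only [_root_.dualRep, map_add, map_sub, map_neg, contragredient_mul]
    abel

theorem CompatRep.dualRep {b₁ b₂ : G → G → G → G} {ρ μ : G → G → Module.End K V}
    (hb₁ : IsSkewSym b₁) (hb₂ : IsSkewSym b₂) (hρ : IsRepMap K ρ) (hμ : IsRepMap K μ)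
    (hrepc : CompatRep b₁ b₂ ρ μ) : CompatRep b₁ b₂ (dualRep ρ) (dualRep μ) := by
  refine ⟨fun x₁ x₂ x₃ x₄ => eq_of_sub_eq_map_sub contragredient (hrepc.1 x₁ x₂ x₃ x₄) ?_,
    fun x₁ x₂ x₃ x₄ =>
      eq_of_sub_eq_map_sub contragredient (hrepc.op_second hb₁ hb₂ hρ hμ x₁ x₂ x₃ x₄) ?_⟩
  all_goals
    simp only [_root_.dualRep, map_add, map_sub, map_neg, contragredient_mul]
    abel

end DualRep

theorem stmt12_general {K G V : Type*} [Field K] [AddCommGroup G] [Module K G]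
    [AddCommGroup V] [Module K V]
    (b₁ b₂ : G → G → G → G) (h₁ : Is3Lie K b₁) (h₂ : Is3Lie K b₂)
    (ρ μ : G → G → Module.End K V) (hρ : IsRepMap K ρ) (hμ : IsRepMap K μ)
    (hrep₁ : Is3LieRep b₁ ρ) (hrep₂ : Is3LieRep b₂ μ) (hrepc : CompatRep b₁ b₂ ρ μ)
    (ρ' μ' : G → G → Module.End K (Module.Dual K V))
    (hρ' : ∀ (x₁ x₂ : G) (α : Module.Dual K V) (v : V),
      ρ' x₁ x₂ α v = - α (ρ x₁ x₂ v))
    (hμ' : ∀ (x₁ x₂ : G) (α : Module.Dual K V) (v : V),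
      μ' x₁ x₂ α v = - α (μ x₁ x₂ v)) :
    IsRepMap K ρ' ∧ IsRepMap K μ' ∧ Is3LieRep b₁ ρ' ∧ Is3LieRep b₂ μ' ∧
      CompatRep b₁ b₂ ρ' μ' := by
  obtain rfl : ρ' = dualRep ρ := by ext x₁ x₂ α v; exact hρ' x₁ x₂ α v
  obtain rfl : μ' = dualRep μ := by ext x₁ x₂ α v; exact hμ' x₁ x₂ α v
  exact ⟨hρ.dualRep, hμ.dualRep, hrep₁.dualRep h₁.2.1 hρ, hrep₂.dualRep h₂.2.1 hμ,
    hrepc.dualRep h₁.2.1 h₂.2.1 hρ hμ⟩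

theorem stmt12 {K G V : Type*} [Field K] [CharZero K] [AddCommGroup G] [Module K G]
    [AddCommGroup V] [Module K V]
    (b₁ b₂ : G → G → G → G) (h₁ : Is3Lie K b₁) (h₂ : Is3Lie K b₂) (hc : Compat b₁ b₂)
    (ρ μ : G → G → Module.End K V) (hρ : IsRepMap K ρ) (hμ : IsRepMap K μ)
    (hrep₁ : Is3LieRep b₁ ρ) (hrep₂ : Is3LieRep b₂ μ) (hrepc : CompatRep b₁ b₂ ρ μ)
    (ρ' μ' : G → G → Module.End K (Module.Dual K V))
    (hρ' : ∀ (x₁ x₂ : G) (α : Module.Dual K V) (v : V),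
      ρ' x₁ x₂ α v = - α (ρ x₁ x₂ v))
    (hμ' : ∀ (x₁ x₂ : G) (α : Module.Dual K V) (v : V),
      μ' x₁ x₂ α v = - α (μ x₁ x₂ v)) :
    IsRepMap K ρ' ∧ IsRepMap K μ' ∧ Is3LieRep b₁ ρ' ∧ Is3LieRep b₂ μ' ∧
      CompatRep b₁ b₂ ρ' μ' :=
  stmt12_general b₁ b₂ h₁ h₂ ρ μ hρ hμ hrep₁ hrep₂ hrepc ρ' μ' hρ' hμ'
end

section
/- Let 0 → V → ĝ →^p g → 0 be an abelian extension of compatible 3-Lie algebras, and σ: g → ĝ a linear section (p∘σ = Id). Define ρ(x,y)u = [σ(x),σ(y),u]_ĝ and μ(x,y)u = {σ(x),σ(y),u}_ĝ for x,y ∈ g, u ∈ V. Then (V;ρ,μ) is a representation of the compatible 3-Lie algebra g, and ρ, μ do not depend on the choice of linear section σ. -/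
/-! Since `V` is abelian in `ĝ`, the bracket `[α, β, u]` with `u ∈ V` vanishes as soon as `α` or
`β` lies in `V = ker p`, so it depends only on `p α` and `p β`: this is the independence of the
section. Lifting `x₁, …, x₄` to `ĝ` and applying the injection `i`, each representation identity
becomes an instance of the Fundamental Identity or of the compatibility condition in `ĝ`, up to
skew-symmetry. -/

section ThreeLie

variable {E : Type*} [AddCommGroup E] {B B₁ B₂ : E → E → E → E}

theorem IsSkewSym.cyclic (hsk : IsSkewSym B) (x y z : E) : B x y z = B y z x := by
  rw [hsk.1, hsk.2, neg_neg]

theorem FundIdent.bracket_mid (hsk : IsSkewSym B) (hfi : FundIdent B) (x₁ x₂ x₃ x₄ x₅ : E) :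
    B x₁ (B x₂ x₃ x₄) x₅ =
      B x₃ x₄ (B x₁ x₂ x₅) - B x₂ x₄ (B x₁ x₃ x₅) + B x₂ x₃ (B x₁ x₄ x₅) := by
  have h := hfi x₅ x₁ x₂ x₃ x₄
  rw [hsk.cyclic x₅ x₁, hsk.cyclic (B x₅ x₁ x₂), hsk.2 x₂ (B x₅ x₁ x₃),
    hsk.cyclic x₅ x₁ x₂, hsk.cyclic x₅ x₁ x₃, hsk.cyclic x₅ x₁ x₄] at h
  rw [h, sub_eq_add_neg]

theorem Compat.bracket_mid (hsk₁ : IsSkewSym B₁) (hsk₂ : IsSkewSym B₂) (hc : Compat B₁ B₂)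
    (x₁ x₂ x₃ x₄ x₅ : E) :
    B₁ (B₂ x₁ x₂ x₃) x₄ x₅ + B₂ (B₁ x₁ x₂ x₃) x₄ x₅
        - B₁ x₃ x₁ (B₂ x₂ x₄ x₅) - B₂ x₃ x₁ (B₁ x₂ x₄ x₅) =
      B₁ x₁ x₂ (B₂ x₃ x₄ x₅) + B₂ x₁ x₂ (B₁ x₃ x₄ x₅)
        + B₁ x₂ x₃ (B₂ x₁ x₄ x₅) + B₂ x₂ x₃ (B₁ x₁ x₄ x₅) := by
  have h := hc x₄ x₅ x₁ x₂ x₃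
  simp only [← hsk₁.cyclic _ x₄ x₅, ← hsk₂.cyclic _ x₄ x₅] at h
  rw [hsk₁.cyclic (B₂ x₁ x₄ x₅), hsk₂.cyclic (B₁ x₁ x₄ x₅), hsk₁.cyclic x₁ (B₂ x₂ x₄ x₅),
    hsk₂.cyclic x₁ (B₁ x₂ x₄ x₅), hsk₁.cyclic _ x₃ x₁, hsk₂.cyclic _ x₃ x₁] at h
  rw [h]
  abel

end ThreeLie

section AbelianExtension

variable {K E G V : Type*} [Field K] [AddCommGroup E] [Module K E] [AddCommGroup G] [Module K G]
  [AddCommGroup V] [Module K V] {B B₁ B₂ : E → E → E → E} {b b₁ b₂ : G → G → G → G}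
  {i : V →ₗ[K] E} {p : E →ₗ[K] G}

theorem bracket_apply_eq_zero_of_mem_ker (hsk : IsSkewSym B)
    (hexact : LinearMap.range i = LinearMap.ker p)
    (habel : ∀ (u v : V) (α : E), B (i u) (i v) α = 0)
    {κ : E} (hκ : κ ∈ LinearMap.ker p) (β : E) (u : V) : B κ β (i u) = 0 := by
  obtain ⟨w, rfl⟩ := hexact ▸ hκ
  rw [hsk.2, habel, neg_zero]

theorem bracket_apply_congr (htr : IsTrilinearMap K B) (hsk : IsSkewSym B)
    (hexact : LinearMap.range i = LinearMap.ker p)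
    (habel : ∀ (u v : V) (α : E), B (i u) (i v) α = 0)
    {α α' β β' : E} (hα : p α = p α') (hβ : p β = p β') (u : V) :
    B α β (i u) = B α' β' (i u) := by
  have left : ∀ {α α'} γ, p α = p α' → B α γ (i u) = B α' γ (i u) := fun γ h => by
    rw [← sub_eq_zero, ← (htr.1 γ (i u)).map_sub]
    exact bracket_apply_eq_zero_of_mem_ker hsk hexact habel (by simp [h]) γ u
  rw [left β hα, hsk.1, left α' hβ, ← hsk.1]

def IsLiftedAction (B : E → E → E → E) (i : V →ₗ[K] E) (p : E →ₗ[K] G)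
    (ρ : G → G → Module.End K V) : Prop :=
  ∀ (α β : E) (u : V), i (ρ (p α) (p β) u) = B α β (i u)

theorem isLiftedAction_of_section (htr : IsTrilinearMap K B) (hsk : IsSkewSym B)
    (hexact : LinearMap.range i = LinearMap.ker p)
    (habel : ∀ (u v : V) (α : E), B (i u) (i v) α = 0)
    {σ : G →ₗ[K] E} (hσ : ∀ x, p (σ x) = x) {ρ : G → G → Module.End K V}
    (hρ : ∀ (x y : G) (u : V), i (ρ x y u) = B (σ x) (σ y) (i u)) :
    IsLiftedAction B i p ρ := fun α β u => by
  rw [hρ]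
  exact bracket_apply_congr htr hsk hexact habel (hσ _) (hσ _) u

namespace IsLiftedAction

variable {ρ μ : G → G → Module.End K V}

theorem isRepMap (hρ : IsLiftedAction B i p ρ) (hi : Function.Injective i)
    (hp : Function.Surjective p) (htr : IsTrilinearMap K B) (hsk : IsSkewSym B) :
    IsRepMap K ρ := by
  refine ⟨fun y => ⟨fun x x' => ?_, fun c x => ?_⟩, fun x => ⟨fun y y' => ?_, fun c y => ?_⟩,
    fun x y => ?_⟩ <;> ext u <;> apply hi
  · rcases hp x, hp x', hp y with ⟨⟨α, rfl⟩, ⟨α', rfl⟩, ⟨β, rfl⟩⟩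
    rw [LinearMap.add_apply, map_add, ← map_add p, hρ, hρ, hρ]
    exact (htr.1 β (i u)).map_add α α'
  · rcases hp x, hp y with ⟨⟨α, rfl⟩, ⟨β, rfl⟩⟩
    rw [LinearMap.smul_apply, map_smul, ← map_smul p, hρ, hρ]
    exact (htr.1 β (i u)).map_smul c α
  · rcases hp x, hp y, hp y' with ⟨⟨α, rfl⟩, ⟨β, rfl⟩, ⟨β', rfl⟩⟩
    rw [LinearMap.add_apply, map_add, ← map_add p, hρ, hρ, hρ]
    exact (htr.2.1 α (i u)).map_add β β'
  · rcases hp x, hp y with ⟨⟨α, rfl⟩, ⟨β, rfl⟩⟩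
    rw [LinearMap.smul_apply, map_smul, ← map_smul p, hρ, hρ]
    exact (htr.2.1 α (i u)).map_smul c β
  · rcases hp x, hp y with ⟨⟨α, rfl⟩, ⟨β, rfl⟩⟩
    rw [LinearMap.neg_apply, map_neg, hρ, hρ, hsk.1]

theorem is3LieRep (hρ : IsLiftedAction B i p ρ) (hi : Function.Injective i)
    (hp : Function.Surjective p) (hsk : IsSkewSym B) (hfi : FundIdent B)
    (hphom : ∀ α β γ, p (B α β γ) = b (p α) (p β) (p γ)) : Is3LieRep b ρ := by
  constructor <;> intro x₁ x₂ x₃ x₄ <;> ext u <;> apply hi <;>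
    rcases hp x₁, hp x₂, hp x₃, hp x₄ with ⟨⟨α₁, rfl⟩, ⟨α₂, rfl⟩, ⟨α₃, rfl⟩, ⟨α₄, rfl⟩⟩ <;>
    simp only [Module.End.mul_apply, LinearMap.add_apply, LinearMap.sub_apply, map_add, map_sub,
      ← hphom, hρ _ _ _]
  · exact hfi α₁ α₂ α₃ α₄ (i u)
  · exact hfi.bracket_mid hsk α₁ α₂ α₃ α₄ (i u)

theorem compatRep (hρ : IsLiftedAction B₁ i p ρ) (hμ : IsLiftedAction B₂ i p μ)
    (hi : Function.Injective i) (hp : Function.Surjective p)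
    (hsk₁ : IsSkewSym B₁) (hsk₂ : IsSkewSym B₂) (hc : Compat B₁ B₂)
    (hphom₁ : ∀ α β γ, p (B₁ α β γ) = b₁ (p α) (p β) (p γ))
    (hphom₂ : ∀ α β γ, p (B₂ α β γ) = b₂ (p α) (p β) (p γ)) : CompatRep b₁ b₂ ρ μ := by
  constructor <;> intro x₁ x₂ x₃ x₄ <;> ext u <;> apply hi <;>
    rcases hp x₁, hp x₂, hp x₃, hp x₄ with ⟨⟨α₁, rfl⟩, ⟨α₂, rfl⟩, ⟨α₃, rfl⟩, ⟨α₄, rfl⟩⟩ <;>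
    simp only [Module.End.mul_apply, LinearMap.add_apply, LinearMap.sub_apply, map_add, map_sub,
      ← hphom₁, ← hphom₂, hρ _ _ _, hμ _ _ _]
  · linear_combination (norm := abel) -hc α₁ α₂ α₃ α₄ (i u)
  · exact hc.bracket_mid hsk₁ hsk₂ α₁ α₂ α₃ α₄ (i u)

end IsLiftedAction

end AbelianExtension

theorem stmt13_general {K E G V : Type*} [Field K]
    [AddCommGroup E] [Module K E] [AddCommGroup G] [Module K G]
    [AddCommGroup V] [Module K V]
    (B₁ B₂ : E → E → E → E) (hB₁ : Is3Lie K B₁) (hB₂ : Is3Lie K B₂) (hBc : Compat B₁ B₂)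
    (b₁ b₂ : G → G → G → G)
    (i : V →ₗ[K] E) (p : E →ₗ[K] G)
    (hi : Function.Injective i) (hp : Function.Surjective p)
    (hexact : LinearMap.range i = LinearMap.ker p)
    (hphom₁ : ∀ a b c, p (B₁ a b c) = b₁ (p a) (p b) (p c))
    (hphom₂ : ∀ a b c, p (B₂ a b c) = b₂ (p a) (p b) (p c))
    (habel₁ : ∀ (u v : V) (α : E), B₁ (i u) (i v) α = 0)
    (habel₂ : ∀ (u v : V) (α : E), B₂ (i u) (i v) α = 0)
    (σ : G →ₗ[K] E) (hσ : ∀ x, p (σ x) = x)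
    (ρ μ : G → G → Module.End K V)
    (hρ : ∀ (x y : G) (u : V), i (ρ x y u) = B₁ (σ x) (σ y) (i u))
    (hμ : ∀ (x y : G) (u : V), i (μ x y u) = B₂ (σ x) (σ y) (i u)) :
    (IsRepMap K ρ ∧ IsRepMap K μ ∧ Is3LieRep b₁ ρ ∧ Is3LieRep b₂ μ ∧
      CompatRep b₁ b₂ ρ μ) ∧
    (∀ σ' : G →ₗ[K] E, (∀ x, p (σ' x) = x) →
      ∀ (x y : G) (u : V), B₁ (σ' x) (σ' y) (i u) = B₁ (σ x) (σ y) (i u) ∧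
        B₂ (σ' x) (σ' y) (i u) = B₂ (σ x) (σ y) (i u)) := by
  obtain ⟨htr₁, hsk₁, hfi₁⟩ := hB₁
  obtain ⟨htr₂, hsk₂, hfi₂⟩ := hB₂
  have hρ' := isLiftedAction_of_section htr₁ hsk₁ hexact habel₁ hσ hρ
  have hμ' := isLiftedAction_of_section htr₂ hsk₂ hexact habel₂ hσ hμ
  refine ⟨⟨hρ'.isRepMap hi hp htr₁ hsk₁, hμ'.isRepMap hi hp htr₂ hsk₂,
    hρ'.is3LieRep hi hp hsk₁ hfi₁ hphom₁, hμ'.is3LieRep hi hp hsk₂ hfi₂ hphom₂,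
    hρ'.compatRep hμ' hi hp hsk₁ hsk₂ hBc hphom₁ hphom₂⟩, fun σ' hσ' x y u => ⟨?_, ?_⟩⟩
  · exact bracket_apply_congr htr₁ hsk₁ hexact habel₁ (by rw [hσ', hσ]) (by rw [hσ', hσ]) u
  · exact bracket_apply_congr htr₂ hsk₂ hexact habel₂ (by rw [hσ', hσ]) (by rw [hσ', hσ]) u

theorem stmt13 {K E G V : Type*} [Field K] [CharZero K]
    [AddCommGroup E] [Module K E] [AddCommGroup G] [Module K G]
    [AddCommGroup V] [Module K V]
    (B₁ B₂ : E → E → E → E) (hB₁ : Is3Lie K B₁) (hB₂ : Is3Lie K B₂) (hBc : Compat B₁ B₂)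
    (b₁ b₂ : G → G → G → G) (hb₁ : Is3Lie K b₁) (hb₂ : Is3Lie K b₂) (hbc : Compat b₁ b₂)
    (i : V →ₗ[K] E) (p : E →ₗ[K] G)
    (hi : Function.Injective i) (hp : Function.Surjective p)
    (hexact : LinearMap.range i = LinearMap.ker p)
    (hphom₁ : ∀ a b c, p (B₁ a b c) = b₁ (p a) (p b) (p c))
    (hphom₂ : ∀ a b c, p (B₂ a b c) = b₂ (p a) (p b) (p c))
    (habel₁ : ∀ (u v : V) (α : E), B₁ (i u) (i v) α = 0)
    (habel₂ : ∀ (u v : V) (α : E), B₂ (i u) (i v) α = 0)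
    (σ : G →ₗ[K] E) (hσ : ∀ x, p (σ x) = x)
    (ρ μ : G → G → Module.End K V)
    (hρ : ∀ (x y : G) (u : V), i (ρ x y u) = B₁ (σ x) (σ y) (i u))
    (hμ : ∀ (x y : G) (u : V), i (μ x y u) = B₂ (σ x) (σ y) (i u)) :
    (IsRepMap K ρ ∧ IsRepMap K μ ∧ Is3LieRep b₁ ρ ∧ Is3LieRep b₂ μ ∧
      CompatRep b₁ b₂ ρ μ) ∧
    (∀ σ' : G →ₗ[K] E, (∀ x, p (σ' x) = x) →
      ∀ (x y : G) (u : V), B₁ (σ' x) (σ' y) (i u) = B₁ (σ x) (σ y) (i u) ∧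
        B₂ (σ' x) (σ' y) (i u) = B₂ (σ x) (σ y) (i u)) :=
  stmt13_general B₁ B₂ hB₁ hB₂ hBc b₁ b₂ i p hi hp hexact hphom₁ hphom₂ habel₁ habel₂ σ hσ ρ μ hρ hμ
end

section
/- Let 0 → V → ĝ →^p g → 0 be an abelian extension of compatible 3-Lie algebras with linear section σ, inducing representation (V;ρ,μ). Define ω₁(x,y,z) = [σ(x),σ(y),σ(z)]_ĝ − σ([x,y,z]_g) and ω₂(x,y,z) = {σ(x),σ(y),σ(z)}_ĝ − σ({x,y,z}_g). Then (ω₁,ω₂) is a 2-cocycle: for all x₁,...,x₅ ∈ g, ω₁(x₁,x₂,[x₃,x₄,x₅]) − ω₁([x₁,x₂,x₃],x₄,x₅) − ω₁(x₃,[x₁,x₂,x₄],x₅) − ω₁(x₃,x₄,[x₁,x₂,x₅]) + ρ(x₁,x₂)ω₁(x₃,x₄,x₅) − ρ(x₃,x₄)ω₁(x₁,x₂,x₅) − ρ(x₄,x₅)ω₁(x₁,x₂,x₃) − ρ(x₅,x₃)ω₁(x₁,x₂,x₄) = 0, the analogous identity holds for (ω₂,{·,·,·},μ), and the mixed identity (sum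 of the two cross versions) holds. -/
/-
Since `i (ω x y z) = [σx, σy, σz] - σ [x, y, z]`, each cochain term `ω(…, [·,·,·]', …)` expands
into a nested bracket of `ĝ` at `σ`-values, minus `σ` of the same nested bracket of `g`, minus a
term `ρ(·,·) ω'(·,·,·)` coming from `[σx, σy, i ω'(…)] = i ρ(x, y) ω'(…)`. So `i` maps the cocycle
expression to the defect of the Fundamental Identity (resp. of compatibility) in `ĝ` minus `σ` of
that defect in `g`, plus representation terms; the defects vanish, and the representation terms
cancel termwise in the pure case and between the two cross versions in the mixed case.
-/

def mixedDefect {G : Type*} [AddCommGroup G] (b b' : G → G → G → G) (x₁ x₂ x₃ x₄ x₅ : G) : G :=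
  b x₁ x₂ (b' x₃ x₄ x₅) - b (b' x₁ x₂ x₃) x₄ x₅ - b x₃ (b' x₁ x₂ x₄) x₅ - b x₃ x₄ (b' x₁ x₂ x₅)

def cocycleRepPart {K G V : Type*} [Field K] [AddCommGroup G] [AddCommGroup V] [Module K V]
    (ρ : G → G → Module.End K V) (w : G → G → G → V) (x₁ x₂ x₃ x₄ x₅ : G) : V :=
  ρ x₁ x₂ (w x₃ x₄ x₅) - ρ x₃ x₄ (w x₁ x₂ x₅) - ρ x₄ x₅ (w x₁ x₂ x₃) - ρ x₅ x₃ (w x₁ x₂ x₄)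

lemma FundIdent.mixedDefect_self_eq_zero {G : Type*} [AddCommGroup G] {b : G → G → G → G}
    (h : FundIdent b) (x₁ x₂ x₃ x₄ x₅ : G) : mixedDefect b b x₁ x₂ x₃ x₄ x₅ = 0 := by
  rw [mixedDefect, h]
  abel

lemma Compat.mixedDefect_add_mixedDefect_eq_zero {G : Type*} [AddCommGroup G]
    {b₁ b₂ : G → G → G → G} (h : Compat b₁ b₂) (x₁ x₂ x₃ x₄ x₅ : G) :
    mixedDefect b₁ b₂ x₁ x₂ x₃ x₄ x₅ + mixedDefect b₂ b₁ x₁ x₂ x₃ x₄ x₅ = 0 := by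
  have h := sub_eq_zero.mpr (h x₁ x₂ x₃ x₄ x₅)
  rw [← h, mixedDefect, mixedDefect]
  abel

namespace IsTrilinearMap

variable {K G H : Type*} [Field K] [AddCommGroup G] [Module K G] [AddCommGroup H] [Module K H]
  {b : G → G → G → H}

lemma map_sub₁ (h : IsTrilinearMap K b) (x x' y z : G) : b (x - x') y z = b x y z - b x' y z :=
  (h.1 y z).map_sub x x'

lemma map_sub₂ (h : IsTrilinearMap K b) (x y y' z : G) : b x (y - y') z = b x y z - b x y' z :=
  (h.2.1 x z).map_sub y y'

lemma map_sub₃ (h : IsTrilinearMap K b) (x y z z' : G) : b x y (z - z') = b x y z - b x y z' :=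
  (h.2.2 x y).map_sub z z'

end IsTrilinearMap

section Extension

variable {K E G V : Type*} [Field K] [AddCommGroup E] [Module K E] [AddCommGroup G] [Module K G]
  [AddCommGroup V] [Module K V]
  {B B' : E → E → E → E} {b b' : G → G → G → G} {i : V →ₗ[K] E} {σ : G →ₗ[K] E}
  {ρ ρ' : G → G → Module.End K V} {w w' : G → G → G → V}

lemma section_bracket_eq (hw' : ∀ x y z, i (w' x y z) = B' (σ x) (σ y) (σ z) - σ (b' x y z))
    (x y z : G) : σ (b' x y z) = B' (σ x) (σ y) (σ z) - i (w' x y z) := by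
  rw [hw', sub_sub_cancel]

lemma bracket_left_eq_rep (hS : IsSkewSym B)
    (hρ : ∀ x y u, i (ρ x y u) = B (σ x) (σ y) (i u)) (x y : G) (u : V) :
    B (i u) (σ x) (σ y) = i (ρ x y u) := by
  rw [hS.1, hS.2 (σ x), neg_neg, hρ]

lemma bracket_mid_eq_rep (hS : IsSkewSym B)
    (hρ : ∀ x y u, i (ρ x y u) = B (σ x) (σ y) (i u)) (x y : G) (u : V) :
    B (σ x) (i u) (σ y) = i (ρ y x u) := by
  rw [hS.2, hS.1 (σ x), neg_neg, hρ]

variable (hT : IsTrilinearMap K B) (hS : IsSkewSym B)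
  (hρ : ∀ x y u, i (ρ x y u) = B (σ x) (σ y) (i u))
  (hw : ∀ x y z, i (w x y z) = B (σ x) (σ y) (σ z) - σ (b x y z))
  (hw' : ∀ x y z, i (w' x y z) = B' (σ x) (σ y) (σ z) - σ (b' x y z))
include hT hρ hw hw'

lemma cochain_bracket_right (x y z₁ z₂ z₃ : G) :
    i (w x y (b' z₁ z₂ z₃)) = B (σ x) (σ y) (B' (σ z₁) (σ z₂) (σ z₃))
      - i (ρ x y (w' z₁ z₂ z₃)) - σ (b x y (b' z₁ z₂ z₃)) := by
  rw [hw, section_bracket_eq hw', hT.map_sub₃, hρ]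

include hS in
lemma cochain_bracket_left (x₁ x₂ x₃ y z : G) :
    i (w (b' x₁ x₂ x₃) y z) = B (B' (σ x₁) (σ x₂) (σ x₃)) (σ y) (σ z)
      - i (ρ y z (w' x₁ x₂ x₃)) - σ (b (b' x₁ x₂ x₃) y z) := by
  rw [hw, section_bracket_eq hw', hT.map_sub₁, bracket_left_eq_rep hS hρ]

include hS in
lemma cochain_bracket_mid (x y₁ y₂ y₃ z : G) :
    i (w x (b' y₁ y₂ y₃) z) = B (σ x) (B' (σ y₁) (σ y₂) (σ y₃)) (σ z)
      - i (ρ z x (w' y₁ y₂ y₃)) - σ (b x (b' y₁ y₂ y₃) z) := by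
  rw [hw, section_bracket_eq hw', hT.map_sub₂, bracket_mid_eq_rep hS hρ]

include hS in
lemma map_cocycleExpr (x₁ x₂ x₃ x₄ x₅ : G) :
    i (CocycleExpr b' ρ' w x₁ x₂ x₃ x₄ x₅) =
      mixedDefect B B' (σ x₁) (σ x₂) (σ x₃) (σ x₄) (σ x₅) - σ (mixedDefect b b' x₁ x₂ x₃ x₄ x₅)
        + i (cocycleRepPart ρ' w x₁ x₂ x₃ x₄ x₅) - i (cocycleRepPart ρ w' x₁ x₂ x₃ x₄ x₅) := by
  simp only [CocycleExpr, mixedDefect, cocycleRepPart, map_add, map_sub,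
    cochain_bracket_right hT hρ hw hw', cochain_bracket_left hT hS hρ hw hw',
    cochain_bracket_mid hT hS hρ hw hw']
  abel

end Extension

section Cocycle

variable {K E G V : Type*} [Field K] [AddCommGroup E] [Module K E] [AddCommGroup G] [Module K G]
  [AddCommGroup V] [Module K V] {i : V →ₗ[K] E} {σ : G →ₗ[K] E}

lemma cocycleExpr_eq_zero {B : E → E → E → E} {b : G → G → G → G} {ρ : G → G → Module.End K V}
    {w : G → G → G → V} (hB : Is3Lie K B) (hb : FundIdent b) (hi : Function.Injective i)
    (hρ : ∀ x y u, i (ρ x y u) = B (σ x) (σ y) (i u))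
    (hw : ∀ x y z, i (w x y z) = B (σ x) (σ y) (σ z) - σ (b x y z)) (x₁ x₂ x₃ x₄ x₅ : G) :
    CocycleExpr b ρ w x₁ x₂ x₃ x₄ x₅ = 0 := by
  apply hi
  rw [map_cocycleExpr hB.1 hB.2.1 hρ hw hw, hB.2.2.mixedDefect_self_eq_zero,
    hb.mixedDefect_self_eq_zero, add_sub_cancel_right, map_zero, map_zero, sub_zero]

lemma cocycleExpr_add_cocycleExpr_eq_zero {B₁ B₂ : E → E → E → E} {b₁ b₂ : G → G → G → G}
    {ρ μ : G → G → Module.End K V} {w₁ w₂ : G → G → G → V}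
    (hT₁ : IsTrilinearMap K B₁) (hS₁ : IsSkewSym B₁)
    (hT₂ : IsTrilinearMap K B₂) (hS₂ : IsSkewSym B₂)
    (hBc : Compat B₁ B₂) (hbc : Compat b₁ b₂) (hi : Function.Injective i)
    (hρ : ∀ x y u, i (ρ x y u) = B₁ (σ x) (σ y) (i u))
    (hμ : ∀ x y u, i (μ x y u) = B₂ (σ x) (σ y) (i u))
    (hw₁ : ∀ x y z, i (w₁ x y z) = B₁ (σ x) (σ y) (σ z) - σ (b₁ x y z))
    (hw₂ : ∀ x y z, i (w₂ x y z) = B₂ (σ x) (σ y) (σ z) - σ (b₂ x y z)) (x₁ x₂ x₃ x₄ x₅ : G) :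
    CocycleExpr b₂ μ w₁ x₁ x₂ x₃ x₄ x₅ + CocycleExpr b₁ ρ w₂ x₁ x₂ x₃ x₄ x₅ = 0 := by
  apply hi
  have hE := hBc.mixedDefect_add_mixedDefect_eq_zero (σ x₁) (σ x₂) (σ x₃) (σ x₄) (σ x₅)
  have hg := congrArg σ (hbc.mixedDefect_add_mixedDefect_eq_zero x₁ x₂ x₃ x₄ x₅)
  rw [map_add, map_zero] at hg
  rw [map_add, map_zero, map_cocycleExpr hT₁ hS₁ hρ hw₁ hw₂,
    map_cocycleExpr hT₂ hS₂ hμ hw₂ hw₁]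
  linear_combination (norm := abel) hE - hg

end Cocycle

theorem stmt14_general {K E G V : Type*} [Field K]
    [AddCommGroup E] [Module K E] [AddCommGroup G] [Module K G]
    [AddCommGroup V] [Module K V]
    (B₁ B₂ : E → E → E → E) (hB₁ : Is3Lie K B₁) (hB₂ : Is3Lie K B₂) (hBc : Compat B₁ B₂)
    (b₁ b₂ : G → G → G → G) (hb₁ : Is3Lie K b₁) (hb₂ : Is3Lie K b₂) (hbc : Compat b₁ b₂)
    (i : V →ₗ[K] E)
    (hi : Function.Injective i)
    (σ : G →ₗ[K] E)
    (ρ μ : G → G → Module.End K V)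
    (hρ : ∀ (x y : G) (u : V), i (ρ x y u) = B₁ (σ x) (σ y) (i u))
    (hμ : ∀ (x y : G) (u : V), i (μ x y u) = B₂ (σ x) (σ y) (i u))
    (w₁ w₂ : G → G → G → V)
    (hw₁ : ∀ x y z, i (w₁ x y z) = B₁ (σ x) (σ y) (σ z) - σ (b₁ x y z))
    (hw₂ : ∀ x y z, i (w₂ x y z) = B₂ (σ x) (σ y) (σ z) - σ (b₂ x y z)) :
    (∀ x₁ x₂ x₃ x₄ x₅ : G, CocycleExpr b₁ ρ w₁ x₁ x₂ x₃ x₄ x₅ = 0) ∧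
    (∀ x₁ x₂ x₃ x₄ x₅ : G, CocycleExpr b₂ μ w₂ x₁ x₂ x₃ x₄ x₅ = 0) ∧
    (∀ x₁ x₂ x₃ x₄ x₅ : G,
      CocycleExpr b₂ μ w₁ x₁ x₂ x₃ x₄ x₅ + CocycleExpr b₁ ρ w₂ x₁ x₂ x₃ x₄ x₅ = 0) :=
  ⟨cocycleExpr_eq_zero hB₁ hb₁.2.2 hi hρ hw₁, cocycleExpr_eq_zero hB₂ hb₂.2.2 hi hμ hw₂,
    cocycleExpr_add_cocycleExpr_eq_zero hB₁.1 hB₁.2.1 hB₂.1 hB₂.2.1 hBc hbc hi hρ hμ hw₁ hw₂⟩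

theorem stmt14 {K E G V : Type*} [Field K] [CharZero K]
    [AddCommGroup E] [Module K E] [AddCommGroup G] [Module K G]
    [AddCommGroup V] [Module K V]
    (B₁ B₂ : E → E → E → E) (hB₁ : Is3Lie K B₁) (hB₂ : Is3Lie K B₂) (hBc : Compat B₁ B₂)
    (b₁ b₂ : G → G → G → G) (hb₁ : Is3Lie K b₁) (hb₂ : Is3Lie K b₂) (hbc : Compat b₁ b₂)
    (i : V →ₗ[K] E) (p : E →ₗ[K] G)
    (hi : Function.Injective i) (hp : Function.Surjective p)
    (hexact : LinearMap.range i = LinearMap.ker p)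
    (hphom₁ : ∀ a b c, p (B₁ a b c) = b₁ (p a) (p b) (p c))
    (hphom₂ : ∀ a b c, p (B₂ a b c) = b₂ (p a) (p b) (p c))
    (habel₁ : ∀ (u v : V) (α : E), B₁ (i u) (i v) α = 0)
    (habel₂ : ∀ (u v : V) (α : E), B₂ (i u) (i v) α = 0)
    (σ : G →ₗ[K] E) (hσ : ∀ x, p (σ x) = x)
    (ρ μ : G → G → Module.End K V)
    (hρ : ∀ (x y : G) (u : V), i (ρ x y u) = B₁ (σ x) (σ y) (i u))
    (hμ : ∀ (x y : G) (u : V), i (μ x y u) = B₂ (σ x) (σ y) (i u))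
    (w₁ w₂ : G → G → G → V)
    (hw₁ : ∀ x y z, i (w₁ x y z) = B₁ (σ x) (σ y) (σ z) - σ (b₁ x y z))
    (hw₂ : ∀ x y z, i (w₂ x y z) = B₂ (σ x) (σ y) (σ z) - σ (b₂ x y z)) :
    (∀ x₁ x₂ x₃ x₄ x₅ : G, CocycleExpr b₁ ρ w₁ x₁ x₂ x₃ x₄ x₅ = 0) ∧
    (∀ x₁ x₂ x₃ x₄ x₅ : G, CocycleExpr b₂ μ w₂ x₁ x₂ x₃ x₄ x₅ = 0) ∧
    (∀ x₁ x₂ x₃ x₄ x₅ : G,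
      CocycleExpr b₂ μ w₁ x₁ x₂ x₃ x₄ x₅ + CocycleExpr b₁ ρ w₂ x₁ x₂ x₃ x₄ x₅ = 0) :=
  stmt14_general B₁ B₂ hB₁ hB₂ hBc b₁ b₂ hb₁ hb₂ hbc i hi σ ρ μ hρ hμ w₁ w₂ hw₁ hw₂
end

section
/- Let 0 → V → ĝ → g → 0 be an abelian extension of compatible 3-Lie algebras. If σ and σ' are two linear sections with associated 2-cocycles (ω₁,ω₂) and (ω₁',ω₂'), then writing τ = σ' − σ (a linear map g → V), we have ω₁'(x,y,z) − ω₁(x,y,z) = ρ(x,y)τ(z) + ρ(y,z)τ(x) + ρ(z,x)τ(y) − τ([x,y,z]_g) and ω₂'(x,y,z) − ω₂(x,y,z) = μ(x,y)τ(z) + μ(y,z)τ(x) + μ(z,x)τ(y) − τ({x,y,z}_g); hence (ω₁,ω₂) and (ω₁',ω₂') differ by a coboundary. -/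
/-
Write `σ' = σ + i ∘ τ` and expand `[σ'x, σ'y, σ'z]` by trilinearity. Every term with two
arguments in `V` vanishes because the extension is abelian, skew-symmetry moves the `V`-argument
of each remaining mixed term to the last slot, where it is the action `ρ` (resp. `μ`) of `τ`; what
is left is `[σx, σy, σz]`, and `σ' [x,y,z] = σ [x,y,z] + τ [x,y,z]`. Injectivity of `i` then
transports the identity back to `V`.
-/

theorem IsSkewSym.apply_cyclic {G H : Type*} [AddCommGroup G] [AddCommGroup H]
    {b : G → G → G → H} (h : IsSkewSym b) (x y z : G) : b x y z = b y z x := by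
  rw [h.1 x y z, h.2 y x z, neg_neg]

section AbelianExtension

variable {K E V : Type*} [Field K] [AddCommGroup E] [Module K E]
  {B : E → E → E → E} {i : V → E}

theorem IsSkewSym.apply_eq_zero_of_first_third (hS : IsSkewSym B)
    (habel : ∀ u v α, B (i u) (i v) α = 0) (u : V) (α : E) (v : V) :
    B (i u) α (i v) = 0 := by
  rw [hS.2, habel, neg_zero]

theorem IsSkewSym.apply_eq_zero_of_second_third (hS : IsSkewSym B)
    (habel : ∀ u v α, B (i u) (i v) α = 0) (α : E) (u v : V) :
    B α (i u) (i v) = 0 := by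
  rw [hS.apply_cyclic, habel]

theorem IsTrilinearMap.apply_add_of_abelian (hT : IsTrilinearMap K B) (hS : IsSkewSym B)
    (habel : ∀ u v α, B (i u) (i v) α = 0) (a b c : E) (u v w : V) :
    B (a + i u) (b + i v) (c + i w) =
      B a b c + B a b (i w) + B b c (i u) + B c a (i v) := by
  obtain ⟨hl₁, hl₂, hl₃⟩ := hT
  rw [(hl₁ _ _).map_add, (hl₂ _ _).map_add, (hl₂ _ _).map_add, (hl₃ _ _).map_add,
    (hl₃ _ _).map_add, (hl₃ _ _).map_add, (hl₃ _ _).map_add, habel, habel,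
    hS.apply_eq_zero_of_first_third habel, hS.apply_eq_zero_of_second_third habel,
    hS.apply_cyclic (i u), hS.apply_cyclic a (i v), hS.apply_cyclic (i v)]
  abel

end AbelianExtension

theorem cocycle_sub_cocycle_eq_of_section_sub {K E G V : Type*} [Field K]
    [AddCommGroup E] [Module K E] [AddCommGroup G] [Module K G]
    [AddCommGroup V] [Module K V]
    {B : E → E → E → E} (hT : IsTrilinearMap K B) (hS : IsSkewSym B)
    {b : G → G → G → G} {i : V →ₗ[K] E} (hi : Function.Injective i)
    (habel : ∀ u v α, B (i u) (i v) α = 0)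
    {σ σ' : G →ₗ[K] E} {ρ : G → G → Module.End K V}
    (hρ : ∀ x y u, i (ρ x y u) = B (σ x) (σ y) (i u))
    {w w' : G → G → G → V}
    (hw : ∀ x y z, i (w x y z) = B (σ x) (σ y) (σ z) - σ (b x y z))
    (hw' : ∀ x y z, i (w' x y z) = B (σ' x) (σ' y) (σ' z) - σ' (b x y z))
    {τ : G →ₗ[K] V} (hτ : ∀ x, i (τ x) = σ' x - σ x) (x y z : G) :
    w' x y z - w x y z = ρ x y (τ z) + ρ y z (τ x) + ρ z x (τ y) - τ (b x y z) := by
  have hσ' : ∀ a, σ' a = σ a + i (τ a) := fun a => sub_eq_iff_eq_add'.1 (hτ a).symm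
  apply hi
  rw [map_sub, hw', hw, hσ' x, hσ' y, hσ' z, hσ' (b x y z),
    hT.apply_add_of_abelian hS habel]
  simp only [map_add, map_sub, hρ]
  abel

theorem stmt15_general {K E G V : Type*} [Field K]
    [AddCommGroup E] [Module K E] [AddCommGroup G] [Module K G]
    [AddCommGroup V] [Module K V]
    (B₁ B₂ : E → E → E → E) (hB₁ : Is3Lie K B₁) (hB₂ : Is3Lie K B₂)
    (b₁ b₂ : G → G → G → G)
    (i : V →ₗ[K] E)
    (hi : Function.Injective i)
    (habel₁ : ∀ (u v : V) (α : E), B₁ (i u) (i v) α = 0)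
    (habel₂ : ∀ (u v : V) (α : E), B₂ (i u) (i v) α = 0)
    (σ σ' : G →ₗ[K] E)
    (ρ μ : G → G → Module.End K V)
    (hρ : ∀ (x y : G) (u : V), i (ρ x y u) = B₁ (σ x) (σ y) (i u))
    (hμ : ∀ (x y : G) (u : V), i (μ x y u) = B₂ (σ x) (σ y) (i u))
    (w₁ w₂ w₁' w₂' : G → G → G → V)
    (hw₁ : ∀ x y z, i (w₁ x y z) = B₁ (σ x) (σ y) (σ z) - σ (b₁ x y z))
    (hw₂ : ∀ x y z, i (w₂ x y z) = B₂ (σ x) (σ y) (σ z) - σ (b₂ x y z))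
    (hw₁' : ∀ x y z, i (w₁' x y z) = B₁ (σ' x) (σ' y) (σ' z) - σ' (b₁ x y z))
    (hw₂' : ∀ x y z, i (w₂' x y z) = B₂ (σ' x) (σ' y) (σ' z) - σ' (b₂ x y z))
    (τ : G →ₗ[K] V) (hτ : ∀ x, i (τ x) = σ' x - σ x) :
    (∀ x y z, w₁' x y z - w₁ x y z =
      ρ x y (τ z) + ρ y z (τ x) + ρ z x (τ y) - τ (b₁ x y z)) ∧
    (∀ x y z, w₂' x y z - w₂ x y z =
      μ x y (τ z) + μ y z (τ x) + μ z x (τ y) - τ (b₂ x y z)) := by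
  exact ⟨cocycle_sub_cocycle_eq_of_section_sub hB₁.1 hB₁.2.1 hi habel₁ hρ hw₁ hw₁' hτ,
    cocycle_sub_cocycle_eq_of_section_sub hB₂.1 hB₂.2.1 hi habel₂ hμ hw₂ hw₂' hτ⟩

theorem stmt15 {K E G V : Type*} [Field K] [CharZero K]
    [AddCommGroup E] [Module K E] [AddCommGroup G] [Module K G]
    [AddCommGroup V] [Module K V]
    (B₁ B₂ : E → E → E → E) (hB₁ : Is3Lie K B₁) (hB₂ : Is3Lie K B₂) (hBc : Compat B₁ B₂)
    (b₁ b₂ : G → G → G → G) (hb₁ : Is3Lie K b₁) (hb₂ : Is3Lie K b₂) (hbc : Compat b₁ b₂)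
    (i : V →ₗ[K] E) (p : E →ₗ[K] G)
    (hi : Function.Injective i) (hp : Function.Surjective p)
    (hexact : LinearMap.range i = LinearMap.ker p)
    (hphom₁ : ∀ a b c, p (B₁ a b c) = b₁ (p a) (p b) (p c))
    (hphom₂ : ∀ a b c, p (B₂ a b c) = b₂ (p a) (p b) (p c))
    (habel₁ : ∀ (u v : V) (α : E), B₁ (i u) (i v) α = 0)
    (habel₂ : ∀ (u v : V) (α : E), B₂ (i u) (i v) α = 0)
    (σ σ' : G →ₗ[K] E) (hσ : ∀ x, p (σ x) = x) (hσ' : ∀ x, p (σ' x) = x)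
    (ρ μ : G → G → Module.End K V)
    (hρ : ∀ (x y : G) (u : V), i (ρ x y u) = B₁ (σ x) (σ y) (i u))
    (hμ : ∀ (x y : G) (u : V), i (μ x y u) = B₂ (σ x) (σ y) (i u))
    (w₁ w₂ w₁' w₂' : G → G → G → V)
    (hw₁ : ∀ x y z, i (w₁ x y z) = B₁ (σ x) (σ y) (σ z) - σ (b₁ x y z))
    (hw₂ : ∀ x y z, i (w₂ x y z) = B₂ (σ x) (σ y) (σ z) - σ (b₂ x y z))
    (hw₁' : ∀ x y z, i (w₁' x y z) = B₁ (σ' x) (σ' y) (σ' z) - σ' (b₁ x y z))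
    (hw₂' : ∀ x y z, i (w₂' x y z) = B₂ (σ' x) (σ' y) (σ' z) - σ' (b₂ x y z))
    (τ : G →ₗ[K] V) (hτ : ∀ x, i (τ x) = σ' x - σ x) :
    (∀ x y z, w₁' x y z - w₁ x y z =
      ρ x y (τ z) + ρ y z (τ x) + ρ z x (τ y) - τ (b₁ x y z)) ∧
    (∀ x y z, w₂' x y z - w₂ x y z =
      μ x y (τ z) + μ y z (τ x) + μ z x (τ y) - τ (b₂ x y z)) :=
  stmt15_general B₁ B₂ hB₁ hB₂ b₁ b₂ i hi habel₁ habel₂ σ σ' ρ μ hρ hμ w₁ w₂ w₁' w₂' hw₁ hw₂ hw₁'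
    hw₂' τ hτ
end
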